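/- arXiv:1403.1864 — 6 statements merged into one kernel-verified Lean document; each statement's English description precedes it below -/
import Mathlib

section
/- Let k be a field, let Ã be a commutative k-algebra with an ideal m̃ such that the composite k → Ã → Ã/m̃ is bijective, and let t ∈ m̃ be a nonzero element with t·m̃ = 0 (so t² = 0 and the ideal (t) equals k·t). Let B₀ be a commutative k-algebra and set B := B₀ ⊗_k Ã, and write B₀⊗(t) := {x ⊗ t : x ∈ B₀} ⊆ B. Suppose {-,-}₁ and {-,-}₂ are two Ã-bilinear brackets on B, each making B a Poisson Ã-algebra (antisymmetric, Jacobi, Leibniz), such that {u,v}₁ − {u,v}₂ ∈ B₀⊗(t) for all u, v ∈ B. Let {-,-}₀ denote the common induced Poisson bracket on B₀ (the image of {x⊗1, y⊗1}₁ under the reduction B → B₀ modulo B₀ ⊗ m̃), and let Λ' : B₀ × B₀ → B₀ be the unique map with {x⊗1, y⊗1}₁ − {x⊗1, y⊗1}₂ = Λ'(x,y) ⊗ t for all x, y ∈ B₀. Then the assignment P ↦ θ_P, where θ_P is the Ã-linear map B → B with θ_P(x⊗1) = x⊗1 + P(x)⊗t, is a bijection from the set of k-linear derivations P : B₀ → B₀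 (satisfying P(xy) = x·P(y) + y·P(x)) such that Λ'(x,y) = {P(x), y}₀ + {x, P(y)}₀ − P({x,y}₀) for all x, y ∈ B₀, onto the set of Ã-algebra isomorphisms θ : B → B satisfying θ({u,v}₁) = {θ(u), θ(v)}₂ and θ(u) − u ∈ B₀⊗(t) for all u, v ∈ B. -/
/-!
Write `θ_P = id + D_P` with `D_P(x ⊗ a) = P(x) ⊗ ta`. Since `t² = 0` we get `D_P ∘ D_P = 0`, so
`θ_P` is bijective. Both `θ_P` and brackets are `Ã`-linear, so products and brackets need only be
compared on `B₀ ⊗ 1`. There, using `t m̃ = 0`, one computes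
`θ_P(uv) = θ_P(u) θ_P(v) + (P(xy) - xP(y) - yP(x)) ⊗ t` and
`θ_P{u,v}₁ = {θ_P u, θ_P v}₂ + (Λ'(x,y) - {Px,y}₀ - {x,Py}₀ + P{x,y}₀) ⊗ t`.
As `x ↦ x ⊗ t` is injective, `θ_P` is a Poisson isomorphism exactly when `P` is an admissible
derivation. Conversely, an isomorphism `θ` as in the statement is `Ã`-linear, hence equals `θ_P`
for the `k`-linear `P` read off from `θ(x ⊗ 1) - x ⊗ 1 = P(x) ⊗ t`.
-/

open scoped TensorProduct

/-- The `Ã`-linear endomorphism `θ_P` of `B = B₀ ⊗ Ã` determined by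
`θ_P(x ⊗ 1) = x ⊗ 1 + P(x) ⊗ t`. -/
noncomputable def thetaFun {k Atil B₀ : Type*} [Field k] [CommRing Atil] [Algebra k Atil]
    [CommRing B₀] [Algebra k B₀] (t : Atil) (P : B₀ →ₗ[k] B₀)
    (u : B₀ ⊗[k] Atil) : B₀ ⊗[k] Atil :=
  u + TensorProduct.map P (LinearMap.mulLeft k t) u

namespace PoissonDeformation

open TensorProduct

section Field

variable {k M N : Type*} [Field k] [AddCommGroup M] [Module k M] [AddCommGroup N] [Module k N]
  {t : N}

theorem exists_leftInverse_tmul (ht : t ≠ 0) : ∃ g : M ⊗[k] N →ₗ[k] M, ∀ x, g (x ⊗ₜ t) = x := by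
  obtain ⟨φ, hφ⟩ := Module.Projective.exists_dual_eq_one k ht
  exact ⟨TensorProduct.rid k M ∘ₗ φ.lTensor M, fun x => by simp [hφ]⟩

theorem tmul_left_injective (ht : t ≠ 0) : Function.Injective fun x : M => x ⊗ₜ[k] t := by
  obtain ⟨g, hg⟩ := exists_leftInverse_tmul (k := k) (M := M) ht
  exact Function.LeftInverse.injective hg

theorem eq_iff_of_eq_add_sub_tmul (ht : t ≠ 0) {u v : M ⊗[k] N} {x y : M}
    (h : u = v + (x - y) ⊗ₜ t) : u = v ↔ x = y := by
  rw [h, add_eq_left, sub_tmul, sub_eq_zero]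
  exact (tmul_left_injective ht).eq_iff

theorem exists_linearMap_eq_tmul {L : Type*} [AddCommGroup L] [Module k L] (ht : t ≠ 0)
    (f : L →ₗ[k] M ⊗[k] N) (hf : ∀ x, ∃ y, f x = y ⊗ₜ t) :
    ∃ p : L →ₗ[k] M, ∀ x, f x = p x ⊗ₜ t := by
  obtain ⟨g, hg⟩ := exists_leftInverse_tmul (k := k) (M := M) ht
  refine ⟨g ∘ₗ f, fun x => ?_⟩
  obtain ⟨y, hy⟩ := hf x
  simp [hy, hg]

end Field

theorem bijective_add_apply_of_apply_apply_eq_zero {M : Type*} [AddCommGroup M] (D : M →+ M)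
    (hD : ∀ u, D (D u) = 0) : Function.Bijective fun u => u + D u :=
  Function.bijective_iff_has_inverse.mpr
    ⟨fun u => u - D u, fun u => by simp [hD], fun u => by simp [hD]⟩

section Atil

variable {k A B₀ : Type*} [CommRing k] [CommRing A] [Algebra k A] [CommRing B₀] [Algebra k B₀]

theorem one_tmul_mul_tmul_one (a : A) (x : B₀) :
    (1 : B₀) ⊗ₜ[k] a * x ⊗ₜ[k] (1 : A) = x ⊗ₜ a := by
  rw [Algebra.TensorProduct.tmul_mul_tmul, one_mul, mul_one]

theorem smul_eq_one_tmul_mul (c : k) (u : B₀ ⊗[k] A) :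
    c • u = (1 : B₀) ⊗ₜ algebraMap k A c * u := by
  rw [← Algebra.TensorProduct.algebraMap_apply', Algebra.smul_def]

/-- `Ã`-linearity for the action of `Ã` on the second tensor factor, for which `B₀ ⊗[k] Ã`
carries no `Module` instance. -/
structure IsAtilLinear (f : B₀ ⊗[k] A → B₀ ⊗[k] A) : Prop where
  map_add : ∀ u v, f (u + v) = f u + f v
  map_one_tmul_mul : ∀ (a : A) u, f ((1 : B₀) ⊗ₜ a * u) = (1 : B₀) ⊗ₜ a * f u

structure IsAtilBilinear (β : B₀ ⊗[k] A → B₀ ⊗[k] A → B₀ ⊗[k] A) : Prop where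
  left : ∀ v, IsAtilLinear (β · v)
  right : ∀ u, IsAtilLinear (β u)

namespace IsAtilLinear

variable {f g : B₀ ⊗[k] A → B₀ ⊗[k] A}

theorem comp (hf : IsAtilLinear f) (hg : IsAtilLinear g) : IsAtilLinear (f ∘ g) :=
  ⟨fun u v => by simp [hg.map_add, hf.map_add],
    fun a u => by simp [hg.map_one_tmul_mul, hf.map_one_tmul_mul]⟩

theorem ext (hf : IsAtilLinear f) (hg : IsAtilLinear g) (h : ∀ x, f (x ⊗ₜ 1) = g (x ⊗ₜ 1)) :
    f = g := by
  funext u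
  induction u using TensorProduct.induction_on with
  | zero => simpa using h 0
  | tmul x a => rw [← one_tmul_mul_tmul_one, hf.map_one_tmul_mul, hg.map_one_tmul_mul, h]
  | add u v hu hv => rw [hf.map_add, hg.map_add, hu, hv]

def toLinearMap (hf : IsAtilLinear f) : B₀ ⊗[k] A →ₗ[k] B₀ ⊗[k] A where
  toFun := f
  map_add' := hf.map_add
  map_smul' c u := by simp only [smul_eq_one_tmul_mul, hf.map_one_tmul_mul, RingHom.id_apply]

@[simp]
theorem toLinearMap_apply (hf : IsAtilLinear f) (u : B₀ ⊗[k] A) : hf.toLinearMap u = f u := rfl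

end IsAtilLinear

theorem isAtilLinear_ringHom {F : Type*} [FunLike F (B₀ ⊗[k] A) (B₀ ⊗[k] A)]
    [RingHomClass F (B₀ ⊗[k] A) (B₀ ⊗[k] A)] (θ : F)
    (hθ : ∀ a : A, θ ((1 : B₀) ⊗ₜ a) = (1 : B₀) ⊗ₜ a) : IsAtilLinear θ :=
  ⟨map_add θ, fun a u => by rw [map_mul, hθ]⟩

namespace IsAtilBilinear

variable {β γ : B₀ ⊗[k] A → B₀ ⊗[k] A → B₀ ⊗[k] A} {f : B₀ ⊗[k] A → B₀ ⊗[k] A}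

theorem ext (hβ : IsAtilBilinear β) (hγ : IsAtilBilinear γ)
    (h : ∀ x y : B₀, β (x ⊗ₜ 1) (y ⊗ₜ 1) = γ (x ⊗ₜ 1) (y ⊗ₜ 1)) : β = γ := by
  have hright x : β (x ⊗ₜ 1) = γ (x ⊗ₜ 1) := (hβ.right _).ext (hγ.right _) (h x)
  funext u v
  exact congrFun ((hβ.left v).ext (hγ.left v) fun x => congrFun (hright x) v) u

theorem compr₂ (hβ : IsAtilBilinear β) (hf : IsAtilLinear f) :
    IsAtilBilinear fun u v => f (β u v) :=
  ⟨fun v => hf.comp (hβ.left v), fun u => hf.comp (hβ.right u)⟩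

theorem compl₁₂ (hβ : IsAtilBilinear β) (hf : IsAtilLinear f) :
    IsAtilBilinear fun u v => β (f u) (f v) :=
  ⟨fun v => (hβ.left (f v)).comp hf, fun u => (hβ.right (f u)).comp hf⟩

end IsAtilBilinear

theorem isAtilBilinear_mul : IsAtilBilinear fun u v : B₀ ⊗[k] A => u * v :=
  ⟨fun _ => ⟨fun _ _ => add_mul .., fun _ _ => mul_assoc ..⟩,
    fun u => ⟨mul_add u, fun _ _ => mul_left_comm ..⟩⟩

variable (k B₀) in
def tensorIdeal (I : Ideal A) : Submodule k (B₀ ⊗[k] A) :=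
  Submodule.span k {w | ∃ (z : B₀) (a : A), a ∈ I ∧ w = z ⊗ₜ[k] a}

variable {I : Ideal A} {t : A}

theorem tensorIdeal_le_ker {M : Type*} [AddCommGroup M] [Module k M]
    (f : B₀ ⊗[k] A →ₗ[k] M) (hf : ∀ z, ∀ a ∈ I, f (z ⊗ₜ a) = 0) :
    tensorIdeal k B₀ I ≤ LinearMap.ker f :=
  Submodule.span_le.mpr <| by
    rintro _ ⟨z, a, ha, rfl⟩
    exact hf z a ha

theorem one_tmul_mul_of_sub_mem (htI : ∀ a ∈ I, t * a = 0) {w : B₀ ⊗[k] A} {z : B₀}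
    (h : w - z ⊗ₜ 1 ∈ tensorIdeal k B₀ I) : (1 : B₀) ⊗ₜ t * w = z ⊗ₜ t := by
  have := tensorIdeal_le_ker (LinearMap.mulLeft k ((1 : B₀) ⊗ₜ[k] t))
    (fun z a ha => by simp [htI a ha]) h
  rwa [LinearMap.mem_ker, LinearMap.mulLeft_apply, mul_sub, one_tmul_mul_tmul_one,
    sub_eq_zero] at this

theorem exists_mul_eq_smul
    (hsurj : Function.Surjective ((Ideal.Quotient.mk I).comp (algebraMap k A)))
    (htI : ∀ a ∈ I, t * a = 0) (a : A) : ∃ c : k, t * a = c • t := by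
  obtain ⟨c, hc⟩ := hsurj (Ideal.Quotient.mk I a)
  have hsub : algebraMap k A c - a ∈ I := Ideal.Quotient.eq.mp hc
  have hta := htI _ hsub
  rw [mul_sub, sub_eq_zero] at hta
  exact ⟨c, by rw [Algebra.smul_def, ← hta, mul_comm]⟩

end Atil

section Theta

variable {k A B₀ : Type*} [Field k] [CommRing A] [Algebra k A] [CommRing B₀] [Algebra k B₀]
  {t : A} (P : B₀ →ₗ[k] B₀)

theorem thetaFun_tmul (x : B₀) (a : A) :
    thetaFun t P (x ⊗ₜ a) = x ⊗ₜ a + P x ⊗ₜ (t * a) := by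
  simp [thetaFun]

theorem thetaFun_tmul_one (x : B₀) : thetaFun t P (x ⊗ₜ 1) = x ⊗ₜ 1 + P x ⊗ₜ t := by
  rw [thetaFun_tmul, mul_one]

theorem isAtilLinear_thetaFun : IsAtilLinear (thetaFun t P) := by
  refine ⟨fun u v => by simp only [thetaFun, map_add]; abel, fun a u => ?_⟩
  induction u using TensorProduct.induction_on with
  | zero => simp [thetaFun]
  | tmul x b => simp [thetaFun_tmul, mul_add, mul_left_comm]
  | add u v hu hv =>
    simp only [thetaFun, mul_add, map_add, add_right_inj] at hu hv ⊢
    rw [hu, hv]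

theorem bijective_thetaFun (htt : t * t = 0) : Function.Bijective (thetaFun t P) := by
  refine bijective_add_apply_of_apply_apply_eq_zero
    (TensorProduct.map P (LinearMap.mulLeft k t)).toAddMonoidHom fun u => ?_
  induction u using TensorProduct.induction_on with
  | zero => simp
  | tmul x a => simp [← mul_assoc, htt]
  | add u v hu hv => simp_all

theorem thetaFun_one_tmul (hP : P 1 = 0) (a : A) :
    thetaFun t P ((1 : B₀) ⊗ₜ a) = (1 : B₀) ⊗ₜ a := by
  simp [thetaFun_tmul, hP]

theorem exists_thetaFun_sub_eq_tmul (hta : ∀ a : A, ∃ c : k, t * a = c • t)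
    (u : B₀ ⊗[k] A) : ∃ x, thetaFun t P u - u = x ⊗ₜ t := by
  simp only [thetaFun, add_sub_cancel_left]
  induction u using TensorProduct.induction_on with
  | zero => exact ⟨0, by simp⟩
  | tmul x a =>
    obtain ⟨c, hc⟩ := hta a
    exact ⟨c • P x, by simp [hc, smul_tmul]⟩
  | add u v hu hv =>
    obtain ⟨x, hx⟩ := hu
    obtain ⟨y, hy⟩ := hv
    exact ⟨x + y, by rw [map_add, hx, hy, add_tmul]⟩

theorem thetaFun_eq_of_sub_mem {I : Ideal A} (htI : ∀ a ∈ I, t * a = 0) {w : B₀ ⊗[k] A} {z : B₀}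
    (h : w - z ⊗ₜ 1 ∈ tensorIdeal k B₀ I) : thetaFun t P w = w + P z ⊗ₜ t := by
  have := tensorIdeal_le_ker (TensorProduct.map P (LinearMap.mulLeft k t))
    (fun z a ha => by simp [htI a ha]) h
  rw [LinearMap.mem_ker, map_sub, sub_eq_zero] at this
  simp [thetaFun, this]

theorem thetaFun_mul_tmul_one (htt : t * t = 0) (x y : B₀) :
    thetaFun t P (x ⊗ₜ 1 * y ⊗ₜ 1) = thetaFun t P (x ⊗ₜ 1) * thetaFun t P (y ⊗ₜ 1) +
      (P (x * y) - (x * P y + y * P x)) ⊗ₜ t := by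
  simp only [Algebra.TensorProduct.tmul_mul_tmul, mul_one, thetaFun_tmul_one, add_mul, mul_add,
    one_mul, htt, tmul_zero, sub_tmul, add_tmul, mul_comm (P x) y]
  abel

theorem thetaFun_mul_iff (htt : t * t = 0) (ht0 : t ≠ 0) :
    (∀ u v, thetaFun t P (u * v) = thetaFun t P u * thetaFun t P v) ↔
      ∀ x y, P (x * y) = x * P y + y * P x := by
  have hgen x y := eq_iff_of_eq_add_sub_tmul ht0 (thetaFun_mul_tmul_one P htt x y)
  refine ⟨fun h x y => (hgen x y).mp (h _ _), fun hP => congrFun₂ ?_⟩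
  exact (isAtilBilinear_mul.compr₂ (isAtilLinear_thetaFun P)).ext
    (isAtilBilinear_mul.compl₁₂ (isAtilLinear_thetaFun P)) fun x y => (hgen x y).mpr (hP x y)

end Theta

section Bracket

variable {k A B₀ : Type*} [Field k] [CommRing A] [Algebra k A] [CommRing B₀] [Algebra k B₀]
  {I : Ideal A} {t : A} {β β₁ β₂ : B₀ ⊗[k] A → B₀ ⊗[k] A → B₀ ⊗[k] A} {β₀ Λ : B₀ → B₀ → B₀}

namespace IsAtilBilinear

theorem apply_tmul_left (hβ : IsAtilBilinear β) (htI : ∀ a ∈ I, t * a = 0)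
    (hβ₀ : ∀ x y, β (x ⊗ₜ 1) (y ⊗ₜ 1) - β₀ x y ⊗ₜ 1 ∈ tensorIdeal k B₀ I) (x y : B₀) :
    β (x ⊗ₜ t) (y ⊗ₜ 1) = β₀ x y ⊗ₜ t := by
  rw [← one_tmul_mul_tmul_one t x, (hβ.left _).map_one_tmul_mul,
    one_tmul_mul_of_sub_mem htI (hβ₀ x y)]

theorem apply_tmul_right (hβ : IsAtilBilinear β) (htI : ∀ a ∈ I, t * a = 0)
    (hβ₀ : ∀ x y, β (x ⊗ₜ 1) (y ⊗ₜ 1) - β₀ x y ⊗ₜ 1 ∈ tensorIdeal k B₀ I) (x y : B₀) :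
    β (x ⊗ₜ 1) (y ⊗ₜ t) = β₀ x y ⊗ₜ t := by
  rw [← one_tmul_mul_tmul_one t y, (hβ.right _).map_one_tmul_mul,
    one_tmul_mul_of_sub_mem htI (hβ₀ x y)]

theorem apply_tmul_tmul (hβ : IsAtilBilinear β) (htI : ∀ a ∈ I, t * a = 0) (htt : t * t = 0)
    (hβ₀ : ∀ x y, β (x ⊗ₜ 1) (y ⊗ₜ 1) - β₀ x y ⊗ₜ 1 ∈ tensorIdeal k B₀ I) (x y : B₀) :
    β (x ⊗ₜ t) (y ⊗ₜ t) = 0 := by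
  rw [← one_tmul_mul_tmul_one t x, (hβ.left _).map_one_tmul_mul, hβ.apply_tmul_right htI hβ₀,
    Algebra.TensorProduct.tmul_mul_tmul, htt, TensorProduct.tmul_zero]

end IsAtilBilinear

theorem thetaFun_bracket_tmul_one (P : B₀ →ₗ[k] B₀) (hβ₂ : IsAtilBilinear β₂)
    (htI : ∀ a ∈ I, t * a = 0) (htmem : t ∈ I)
    (hβ₁₀ : ∀ x y, β₁ (x ⊗ₜ 1) (y ⊗ₜ 1) - β₀ x y ⊗ₜ 1 ∈ tensorIdeal k B₀ I)
    (hΛ : ∀ x y, β₁ (x ⊗ₜ 1) (y ⊗ₜ 1) - β₂ (x ⊗ₜ 1) (y ⊗ₜ 1) = Λ x y ⊗ₜ t) (x y : B₀) :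
    thetaFun t P (β₁ (x ⊗ₜ 1) (y ⊗ₜ 1)) =
      β₂ (thetaFun t P (x ⊗ₜ 1)) (thetaFun t P (y ⊗ₜ 1)) +
        (Λ x y - (β₀ (P x) y + β₀ x (P y) - P (β₀ x y))) ⊗ₜ t := by
  have hβ₂₀ x y : β₂ (x ⊗ₜ 1) (y ⊗ₜ 1) - β₀ x y ⊗ₜ 1 ∈ tensorIdeal k B₀ I := by
    rw [show β₂ (x ⊗ₜ 1) (y ⊗ₜ 1) - β₀ x y ⊗ₜ 1 =
        (β₁ (x ⊗ₜ 1) (y ⊗ₜ 1) - β₀ x y ⊗ₜ 1) - Λ x y ⊗ₜ t by rw [← hΛ]; abel]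
    exact sub_mem (hβ₁₀ x y) (Submodule.subset_span ⟨Λ x y, t, htmem, rfl⟩)
  rw [thetaFun_eq_of_sub_mem P htI (hβ₁₀ x y), thetaFun_tmul_one, thetaFun_tmul_one,
    (hβ₂.left _).map_add, (hβ₂.right _).map_add, (hβ₂.right _).map_add,
    hβ₂.apply_tmul_left htI hβ₂₀, hβ₂.apply_tmul_right htI hβ₂₀,
    hβ₂.apply_tmul_tmul htI (htI t htmem) hβ₂₀]
  simp only [sub_tmul, add_tmul]
  linear_combination hΛ x y

theorem thetaFun_bracket_iff (P : B₀ →ₗ[k] B₀) (hβ₁ : IsAtilBilinear β₁)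
    (hβ₂ : IsAtilBilinear β₂) (htI : ∀ a ∈ I, t * a = 0) (htmem : t ∈ I) (ht0 : t ≠ 0)
    (hβ₁₀ : ∀ x y, β₁ (x ⊗ₜ 1) (y ⊗ₜ 1) - β₀ x y ⊗ₜ 1 ∈ tensorIdeal k B₀ I)
    (hΛ : ∀ x y, β₁ (x ⊗ₜ 1) (y ⊗ₜ 1) - β₂ (x ⊗ₜ 1) (y ⊗ₜ 1) = Λ x y ⊗ₜ t) :
    (∀ u v, thetaFun t P (β₁ u v) = β₂ (thetaFun t P u) (thetaFun t P v)) ↔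
      ∀ x y, Λ x y = β₀ (P x) y + β₀ x (P y) - P (β₀ x y) := by
  have hgen x y := eq_iff_of_eq_add_sub_tmul ht0
    (thetaFun_bracket_tmul_one P hβ₂ htI htmem hβ₁₀ hΛ x y)
  refine ⟨fun h x y => (hgen x y).mp (h _ _), fun hP => congrFun₂ ?_⟩
  exact (hβ₁.compr₂ (isAtilLinear_thetaFun P)).ext
    (hβ₂.compl₁₂ (isAtilLinear_thetaFun P)) fun x y => (hgen x y).mpr (hP x y)

end Bracket

theorem exists_eq_thetaFun {k A B₀ F : Type*} [Field k] [CommRing A] [Algebra k A] [CommRing B₀]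
    [Algebra k B₀] [FunLike F (B₀ ⊗[k] A) (B₀ ⊗[k] A)] [RingHomClass F (B₀ ⊗[k] A) (B₀ ⊗[k] A)]
    {t : A} (ht0 : t ≠ 0) (θ : F) (hθ : ∀ a : A, θ ((1 : B₀) ⊗ₜ a) = (1 : B₀) ⊗ₜ a)
    (hθt : ∀ u, ∃ x, θ u - u = x ⊗ₜ t) : ∃ P : B₀ →ₗ[k] B₀, ⇑θ = thetaFun t P := by
  have hθA := isAtilLinear_ringHom θ hθ
  obtain ⟨P, hP⟩ := exists_linearMap_eq_tmul ht0
    ((hθA.toLinearMap - LinearMap.id) ∘ₗ (TensorProduct.mk k B₀ A).flip 1) fun x => hθt _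
  refine ⟨P, hθA.ext (isAtilLinear_thetaFun P) fun x => ?_⟩
  rw [thetaFun_tmul_one, ← hP x]
  simp

end PoissonDeformation

theorem stmt0_general (k Atil B₀ : Type*) [Field k] [CommRing Atil] [Algebra k Atil]
    [CommRing B₀] [Algebra k B₀]
    (mtil : Ideal Atil)
    (hres : Function.Bijective ((Ideal.Quotient.mk mtil).comp (algebraMap k Atil)))
    (t : Atil) (htmem : t ∈ mtil) (ht0 : t ≠ 0) (htann : ∀ x ∈ mtil, t * x = 0)
    (P₁ P₂ : B₀ ⊗[k] Atil → B₀ ⊗[k] Atil → B₀ ⊗[k] Atil)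
    -- `P₁` is an `Ã`-bilinear Poisson bracket
    (h₁addl : ∀ u v w : B₀ ⊗[k] Atil, P₁ (u + v) w = P₁ u w + P₁ v w)
    (h₁addr : ∀ u v w : B₀ ⊗[k] Atil, P₁ u (v + w) = P₁ u v + P₁ u w)
    (h₁linl : ∀ (a : Atil) (u v : B₀ ⊗[k] Atil),
      P₁ (((1 : B₀) ⊗ₜ[k] a) * u) v = ((1 : B₀) ⊗ₜ[k] a) * P₁ u v)
    (h₁linr : ∀ (a : Atil) (u v : B₀ ⊗[k] Atil),
      P₁ u (((1 : B₀) ⊗ₜ[k] a) * v) = ((1 : B₀) ⊗ₜ[k] a) * P₁ u v)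
    -- `P₂` is an `Ã`-bilinear Poisson bracket
    (h₂addl : ∀ u v w : B₀ ⊗[k] Atil, P₂ (u + v) w = P₂ u w + P₂ v w)
    (h₂addr : ∀ u v w : B₀ ⊗[k] Atil, P₂ u (v + w) = P₂ u v + P₂ u w)
    (h₂linl : ∀ (a : Atil) (u v : B₀ ⊗[k] Atil),
      P₂ (((1 : B₀) ⊗ₜ[k] a) * u) v = ((1 : B₀) ⊗ₜ[k] a) * P₂ u v)
    (h₂linr : ∀ (a : Atil) (u v : B₀ ⊗[k] Atil),
      P₂ u (((1 : B₀) ⊗ₜ[k] a) * v) = ((1 : B₀) ⊗ₜ[k] a) * P₂ u v)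
    -- `P0` is the common induced Poisson bracket on `B₀` (modulo `B₀ ⊗ m̃`)
    (P0 : B₀ → B₀ → B₀)
    (hP0 : ∀ x y : B₀,
      P₁ (x ⊗ₜ[k] 1) (y ⊗ₜ[k] 1) - P0 x y ⊗ₜ[k] 1 ∈
        Submodule.span k {w : B₀ ⊗[k] Atil | ∃ (z : B₀) (a : Atil), a ∈ mtil ∧ w = z ⊗ₜ[k] a})
    -- `Λ'` measures the difference of the two brackets
    (Λ' : B₀ → B₀ → B₀)
    (hΛ' : ∀ x y : B₀,
      P₁ (x ⊗ₜ[k] 1) (y ⊗ₜ[k] 1) - P₂ (x ⊗ₜ[k] 1) (y ⊗ₜ[k] 1) = Λ' x y ⊗ₜ[k] t) :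
    -- (1) for each admissible derivation `P`, `θ_P` is an `Ã`-algebra isomorphism
    --     `(B,P₁) → (B,P₂)` inducing the identity modulo `B₀ ⊗ (t)`
    (∀ P : B₀ →ₗ[k] B₀,
      (∀ x y : B₀, P (x * y) = x * P y + y * P x) →
      (∀ x y : B₀, Λ' x y = P0 (P x) y + P0 x (P y) - P (P0 x y)) →
      (∀ x : B₀, thetaFun t P (x ⊗ₜ[k] 1) = x ⊗ₜ[k] 1 + P x ⊗ₜ[k] t) ∧
      Function.Bijective (thetaFun t P) ∧
      (∀ u v : B₀ ⊗[k] Atil, thetaFun t P (u * v) = thetaFun t P u * thetaFun t P v) ∧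
      (∀ a : Atil, thetaFun t P ((1 : B₀) ⊗ₜ[k] a) = (1 : B₀) ⊗ₜ[k] a) ∧
      (∀ u v : B₀ ⊗[k] Atil,
        thetaFun t P (P₁ u v) = P₂ (thetaFun t P u) (thetaFun t P v)) ∧
      (∀ u : B₀ ⊗[k] Atil,
        thetaFun t P u - u ∈ {w : B₀ ⊗[k] Atil | ∃ x : B₀, w = x ⊗ₜ[k] t})) ∧
    -- (2) every such isomorphism is `θ_P` for a unique admissible derivation `P`
    (∀ θ : B₀ ⊗[k] Atil ≃+* B₀ ⊗[k] Atil,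
      (∀ a : Atil, θ ((1 : B₀) ⊗ₜ[k] a) = (1 : B₀) ⊗ₜ[k] a) →
      (∀ u v : B₀ ⊗[k] Atil, θ (P₁ u v) = P₂ (θ u) (θ v)) →
      (∀ u : B₀ ⊗[k] Atil, θ u - u ∈ {w : B₀ ⊗[k] Atil | ∃ x : B₀, w = x ⊗ₜ[k] t}) →
      ∃! P : B₀ →ₗ[k] B₀,
        (∀ x y : B₀, P (x * y) = x * P y + y * P x) ∧
        (∀ x y : B₀, Λ' x y = P0 (P x) y + P0 x (P y) - P (P0 x y)) ∧
        (∀ x : B₀, θ (x ⊗ₜ[k] 1) = x ⊗ₜ[k] 1 + P x ⊗ₜ[k] t)) := by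
  open PoissonDeformation in
  have htt : t * t = 0 := htann t htmem
  have hβ₁ : IsAtilBilinear P₁ := ⟨fun v => ⟨fun u w => h₁addl u w v, fun a u => h₁linl a u v⟩,
    fun u => ⟨h₁addr u, fun a v => h₁linr a u v⟩⟩
  have hβ₂ : IsAtilBilinear P₂ := ⟨fun v => ⟨fun u w => h₂addl u w v, fun a u => h₂linl a u v⟩,
    fun u => ⟨h₂addr u, fun a v => h₂linr a u v⟩⟩
  have hbracket P := thetaFun_bracket_iff P hβ₁ hβ₂ htann htmem ht0 hP0 hΛ'
  refine ⟨fun P hder hcoc => ⟨thetaFun_tmul_one P, bijective_thetaFun P htt,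
      (thetaFun_mul_iff P htt ht0).mpr hder,
      thetaFun_one_tmul P (Derivation.mk' P hder).map_one_eq_zero, (hbracket P).mpr hcoc,
      exists_thetaFun_sub_eq_tmul P (exists_mul_eq_smul hres.2 htann)⟩,
    fun θ hθA hθβ hθt => ?_⟩
  obtain ⟨P, hθP⟩ := exists_eq_thetaFun ht0 θ hθA hθt
  rw [hθP] at hθβ ⊢
  refine ⟨P, ⟨(thetaFun_mul_iff P htt ht0).mp (hθP ▸ map_mul θ), (hbracket P).mp hθβ,
    thetaFun_tmul_one P⟩, fun Q hQ => ?_⟩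
  ext x
  exact tmul_left_injective ht0 (add_left_cancel ((hQ.2.2 x).symm.trans (thetaFun_tmul_one P x)))

/-- Over a small extension `(Ã, m̃, t)`, given two Poisson `Ã`-algebra structures `P₁`, `P₂`
on `B = B₀ ⊗ Ã` differing by elements of `B₀ ⊗ (t)`, with common induced bracket `P0` on
`B₀` and difference cocycle `Λ'`, the assignment `P ↦ θ_P` is a bijection from the
derivations `P` of `B₀` with `Λ'(x,y) = {Px,y}₀ + {x,Py}₀ − P({x,y}₀)` onto the
`Ã`-algebra isomorphisms `θ : (B,P₁) → (B,P₂)` inducing the identity modulo `B₀ ⊗ (t)`. -/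
theorem stmt0 (k Atil B₀ : Type*) [Field k] [CommRing Atil] [Algebra k Atil]
    [CommRing B₀] [Algebra k B₀]
    (mtil : Ideal Atil)
    (hres : Function.Bijective ((Ideal.Quotient.mk mtil).comp (algebraMap k Atil)))
    (t : Atil) (htmem : t ∈ mtil) (ht0 : t ≠ 0) (htann : ∀ x ∈ mtil, t * x = 0)
    (P₁ P₂ : B₀ ⊗[k] Atil → B₀ ⊗[k] Atil → B₀ ⊗[k] Atil)
    -- `P₁` is an `Ã`-bilinear Poisson bracket
    (h₁addl : ∀ u v w : B₀ ⊗[k] Atil, P₁ (u + v) w = P₁ u w + P₁ v w)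
    (h₁addr : ∀ u v w : B₀ ⊗[k] Atil, P₁ u (v + w) = P₁ u v + P₁ u w)
    (h₁linl : ∀ (a : Atil) (u v : B₀ ⊗[k] Atil),
      P₁ (((1 : B₀) ⊗ₜ[k] a) * u) v = ((1 : B₀) ⊗ₜ[k] a) * P₁ u v)
    (h₁linr : ∀ (a : Atil) (u v : B₀ ⊗[k] Atil),
      P₁ u (((1 : B₀) ⊗ₜ[k] a) * v) = ((1 : B₀) ⊗ₜ[k] a) * P₁ u v)
    (h₁anti : ∀ u v : B₀ ⊗[k] Atil, P₁ u v = -P₁ v u)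
    (h₁jac : ∀ u v w : B₀ ⊗[k] Atil, P₁ u (P₁ v w) = P₁ (P₁ u v) w + P₁ v (P₁ u w))
    (h₁leib : ∀ u v w : B₀ ⊗[k] Atil, P₁ u (v * w) = v * P₁ u w + w * P₁ u v)
    -- `P₂` is an `Ã`-bilinear Poisson bracket
    (h₂addl : ∀ u v w : B₀ ⊗[k] Atil, P₂ (u + v) w = P₂ u w + P₂ v w)
    (h₂addr : ∀ u v w : B₀ ⊗[k] Atil, P₂ u (v + w) = P₂ u v + P₂ u w)
    (h₂linl : ∀ (a : Atil) (u v : B₀ ⊗[k] Atil),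
      P₂ (((1 : B₀) ⊗ₜ[k] a) * u) v = ((1 : B₀) ⊗ₜ[k] a) * P₂ u v)
    (h₂linr : ∀ (a : Atil) (u v : B₀ ⊗[k] Atil),
      P₂ u (((1 : B₀) ⊗ₜ[k] a) * v) = ((1 : B₀) ⊗ₜ[k] a) * P₂ u v)
    (h₂anti : ∀ u v : B₀ ⊗[k] Atil, P₂ u v = -P₂ v u)
    (h₂jac : ∀ u v w : B₀ ⊗[k] Atil, P₂ u (P₂ v w) = P₂ (P₂ u v) w + P₂ v (P₂ u w))
    (h₂leib : ∀ u v w : B₀ ⊗[k] Atil, P₂ u (v * w) = v * P₂ u w + w * P₂ u v)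
    -- the two brackets differ by elements of `B₀ ⊗ (t)`
    (hdiff : ∀ u v : B₀ ⊗[k] Atil,
      P₁ u v - P₂ u v ∈ {w : B₀ ⊗[k] Atil | ∃ x : B₀, w = x ⊗ₜ[k] t})
    -- `P0` is the common induced Poisson bracket on `B₀` (modulo `B₀ ⊗ m̃`)
    (P0 : B₀ → B₀ → B₀)
    (hP0 : ∀ x y : B₀,
      P₁ (x ⊗ₜ[k] 1) (y ⊗ₜ[k] 1) - P0 x y ⊗ₜ[k] 1 ∈
        Submodule.span k {w : B₀ ⊗[k] Atil | ∃ (z : B₀) (a : Atil), a ∈ mtil ∧ w = z ⊗ₜ[k] a})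
    -- `Λ'` measures the difference of the two brackets
    (Λ' : B₀ → B₀ → B₀)
    (hΛ' : ∀ x y : B₀,
      P₁ (x ⊗ₜ[k] 1) (y ⊗ₜ[k] 1) - P₂ (x ⊗ₜ[k] 1) (y ⊗ₜ[k] 1) = Λ' x y ⊗ₜ[k] t) :
    -- (1) for each admissible derivation `P`, `θ_P` is an `Ã`-algebra isomorphism
    --     `(B,P₁) → (B,P₂)` inducing the identity modulo `B₀ ⊗ (t)`
    (∀ P : B₀ →ₗ[k] B₀,
      (∀ x y : B₀, P (x * y) = x * P y + y * P x) →
      (∀ x y : B₀, Λ' x y = P0 (P x) y + P0 x (P y) - P (P0 x y)) →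
      (∀ x : B₀, thetaFun t P (x ⊗ₜ[k] 1) = x ⊗ₜ[k] 1 + P x ⊗ₜ[k] t) ∧
      Function.Bijective (thetaFun t P) ∧
      (∀ u v : B₀ ⊗[k] Atil, thetaFun t P (u * v) = thetaFun t P u * thetaFun t P v) ∧
      (∀ a : Atil, thetaFun t P ((1 : B₀) ⊗ₜ[k] a) = (1 : B₀) ⊗ₜ[k] a) ∧
      (∀ u v : B₀ ⊗[k] Atil,
        thetaFun t P (P₁ u v) = P₂ (thetaFun t P u) (thetaFun t P v)) ∧
      (∀ u : B₀ ⊗[k] Atil,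
        thetaFun t P u - u ∈ {w : B₀ ⊗[k] Atil | ∃ x : B₀, w = x ⊗ₜ[k] t})) ∧
    -- (2) every such isomorphism is `θ_P` for a unique admissible derivation `P`
    (∀ θ : B₀ ⊗[k] Atil ≃+* B₀ ⊗[k] Atil,
      (∀ a : Atil, θ ((1 : B₀) ⊗ₜ[k] a) = (1 : B₀) ⊗ₜ[k] a) →
      (∀ u v : B₀ ⊗[k] Atil, θ (P₁ u v) = P₂ (θ u) (θ v)) →
      (∀ u : B₀ ⊗[k] Atil, θ u - u ∈ {w : B₀ ⊗[k] Atil | ∃ x : B₀, w = x ⊗ₜ[k] t}) →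
      ∃! P : B₀ →ₗ[k] B₀,
        (∀ x y : B₀, P (x * y) = x * P y + y * P x) ∧
        (∀ x y : B₀, Λ' x y = P0 (P x) y + P0 x (P y) - P (P0 x y)) ∧
        (∀ x : B₀, θ (x ⊗ₜ[k] 1) = x ⊗ₜ[k] 1 + P x ⊗ₜ[k] t)) :=
  stmt0_general k Atil B₀ mtil hres t htmem ht0 htann P₁ P₂ h₁addl h₁addr h₁linl h₁linr h₂addl
    h₂addr h₂linl h₂linr P0 hP0 Λ' hΛ'
end

section
/- Let k be a field, let Ã be a commutative k-algebra with an ideal m̃ such that the composite k → Ã → Ã/m̃ is bijective, and let t ∈ m̃ be a nonzero element with t·m̃ = 0 (so t² = 0 and the ideal (t) equals k·t). Let B₀ be a commutative k-algebra, set B := B₀ ⊗_k Ã and B₀⊗(t) := {x ⊗ t : x ∈ B₀} ⊆ B, and let {-,-} be an Ã-bilinear bracket making B a Poisson Ã-algebra, with induced Poisson bracket {-,-}₀ on B₀. Then the set of Ã-algebra automorphisms θ of B satisfying θ({u,v}) = {θ(u), θ(v)} and θ(u) − u ∈ B₀⊗(t) for all u, v ∈ B forms a group under composition, and the assignment P ↦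 θ_P, where θ_P is the Ã-linear map with θ_P(x⊗1) = x⊗1 + P(x)⊗t, is a group isomorphism onto this group from the additive group of k-linear derivations P : B₀ → B₀ satisfying P({x,y}₀) = {P(x), y}₀ + {x, P(y)}₀ for all x, y ∈ B₀ (the Poisson k-derivations of B₀). -/
open scoped TensorProduct

/-- The condition that a ring automorphism `θ` of `B = B₀ ⊗ Ã` is an `Ã`-algebra
automorphism which is a Poisson automorphism of `(B, P)` and induces the identity
modulo `B₀ ⊗ (t)`. -/
def SCond {k Atil B₀ : Type*} [Field k] [CommRing Atil] [Algebra k Atil]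
    [CommRing B₀] [Algebra k B₀] (t : Atil)
    (P : B₀ ⊗[k] Atil → B₀ ⊗[k] Atil → B₀ ⊗[k] Atil)
    (θ : B₀ ⊗[k] Atil ≃+* B₀ ⊗[k] Atil) : Prop :=
  (∀ a : Atil, θ ((1 : B₀) ⊗ₜ[k] a) = (1 : B₀) ⊗ₜ[k] a) ∧
  (∀ u v : B₀ ⊗[k] Atil, θ (P u v) = P (θ u) (θ v)) ∧
  (∀ u : B₀ ⊗[k] Atil, θ u - u ∈ {w : B₀ ⊗[k] Atil | ∃ x : B₀, w = x ⊗ₜ[k] t})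

/-- The condition that `P : B₀ → B₀` is a Poisson `k`-derivation of `(B₀, P0)`: it is a
derivation for the product and for the Poisson bracket. -/
def DCond {k B₀ : Type*} [Field k] [CommRing B₀] [Algebra k B₀]
    (P0 : B₀ → B₀ → B₀) (P : B₀ →ₗ[k] B₀) : Prop :=
  (∀ x y : B₀, P (x * y) = x * P y + y * P x) ∧
  (∀ x y : B₀, P (P0 x y) = P0 (P x) y + P0 x (P y))

/-!
Let `r : B₀ ⊗ Ã → B₀` be reduction modulo `m̃`. Since `t·m̃ = 0`, multiplication by `1 ⊗ t`
factors through `r`, `(1 ⊗ t)·u = r(u) ⊗ t`, and `t² = 0`. Hence `θ_P(u) = u + P(r u) ⊗ t`, and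
expanding shows that `θ_P(uv) - θ_P(u)θ_P(v)` and `θ_P{u,v} - {θ_P u, θ_P v}` are the defects of
`P` as a derivation of the product and of `{-,-}₀` at `(r u, r v)`, tensored with `t`. As
`x ↦ x ⊗ t` is injective, `θ_P` is a Poisson automorphism exactly when `P` is a Poisson derivation.
Conversely, an `Ã`-linear `θ` with `θ - id` valued in `B₀ ⊗ t` equals `θ_P` for
`P x := (θ - id)(x ⊗ 1) / t`, and `θ_P ∘ θ_Q = θ_{P+Q}` because `t² = 0`.
-/

open TensorProduct

section Residue

variable {k A : Type*} [Field k] [CommRing A] [Algebra k A] {m : Ideal A}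

noncomputable def residueAlgHom (hres : Function.Bijective (algebraMap k (A ⧸ m))) : A →ₐ[k] k :=
  (AlgEquiv.ofBijective (Algebra.ofId k (A ⧸ m)) hres).symm.toAlgHom.comp
    (Ideal.Quotient.mkₐ k m)

variable (hres : Function.Bijective (algebraMap k (A ⧸ m)))

theorem residueAlgHom_eq_zero_of_mem {a : A} (ha : a ∈ m) : residueAlgHom hres a = 0 := by
  simp [residueAlgHom, Ideal.Quotient.eq_zero_iff_mem.mpr ha]

theorem sub_algebraMap_residueAlgHom_mem (a : A) :
    a - algebraMap k A (residueAlgHom hres a) ∈ m := by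
  rw [← Ideal.Quotient.eq_zero_iff_mem, map_sub, sub_eq_zero, Ideal.Quotient.mk_algebraMap]
  exact ((AlgEquiv.ofBijective (Algebra.ofId k (A ⧸ m)) hres).apply_symm_apply _).symm

theorem mul_eq_residueAlgHom_smul {t : A} (htann : ∀ x ∈ m, t * x = 0) (a : A) :
    t * a = residueAlgHom hres a • t := by
  have h := htann _ (sub_algebraMap_residueAlgHom_mem hres a)
  rw [mul_sub, sub_eq_zero] at h
  rw [h, mul_comm, Algebra.smul_def]

end Residue

section Reduction

variable {k A B₀ : Type*} [CommRing k] [CommRing A] [Algebra k A] [CommRing B₀] [Algebra k B₀]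

noncomputable def reduction (ε : A →ₐ[k] k) : B₀ ⊗[k] A →ₐ[k] B₀ :=
  (Algebra.TensorProduct.rid k k B₀).toAlgHom.comp
    (Algebra.TensorProduct.map (AlgHom.id k B₀) ε)

variable (ε : A →ₐ[k] k)

@[simp]
theorem reduction_tmul (x : B₀) (a : A) : reduction ε (x ⊗ₜ[k] a) = ε a • x := by
  simp [reduction]

theorem reduction_tmul_one (x : B₀) : reduction ε (x ⊗ₜ[k] (1 : A)) = x := by
  simp

theorem reduction_one_tmul_mul (a : A) (u : B₀ ⊗[k] A) :
    reduction ε ((1 : B₀) ⊗ₜ[k] a * u) = ε a • reduction ε u := by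
  rw [map_mul, reduction_tmul, smul_one_mul]

theorem span_le_ker_reduction {m : Ideal A} (hε : ∀ a ∈ m, ε a = 0) :
    Submodule.span k {w : B₀ ⊗[k] A | ∃ (z : B₀) (a : A), a ∈ m ∧ w = z ⊗ₜ[k] a} ≤
      LinearMap.ker (reduction ε).toLinearMap := by
  rw [Submodule.span_le]
  rintro _ ⟨z, a, ha, rfl⟩
  simp [hε a ha]

theorem one_tmul_mul_tmul_one (z : B₀) (a : A) :
    (1 : B₀) ⊗ₜ[k] a * z ⊗ₜ[k] (1 : A) = z ⊗ₜ[k] a := by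
  rw [Algebra.TensorProduct.tmul_mul_tmul, one_mul, mul_one]

theorem reduction_comp_eq (f : B₀ ⊗[k] A → B₀ ⊗[k] A) (hadd : ∀ u v, f (u + v) = f u + f v)
    (hlin : ∀ (a : A) u, f ((1 : B₀) ⊗ₜ[k] a * u) = (1 : B₀) ⊗ₜ[k] a * f u) (u : B₀ ⊗[k] A) :
    reduction ε (f u) = reduction ε (f (reduction ε u ⊗ₜ[k] 1)) := by
  induction u using TensorProduct.induction_on with
  | zero => rw [map_zero, zero_tmul]
  | tmul x a =>
    rw [reduction_tmul, smul_tmul, ← Algebra.algebraMap_eq_smul_one, ← one_tmul_mul_tmul_one x a,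
      ← one_tmul_mul_tmul_one x (algebraMap k A (ε a)), hlin, hlin, reduction_one_tmul_mul,
      reduction_one_tmul_mul, AlgHom.commutes, Algebra.algebraMap_self, RingHom.id_apply]
  | add u v hu hv => rw [hadd, map_add, hu, hv, map_add, add_tmul, hadd, map_add]

structure IsBilinearBracket (Br : B₀ ⊗[k] A → B₀ ⊗[k] A → B₀ ⊗[k] A) : Prop where
  add_left : ∀ u v w, Br (u + v) w = Br u w + Br v w
  add_right : ∀ u v w, Br u (v + w) = Br u v + Br u w
  mul_left : ∀ (a : A) u v, Br ((1 : B₀) ⊗ₜ[k] a * u) v = (1 : B₀) ⊗ₜ[k] a * Br u v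
  mul_right : ∀ (a : A) u v, Br u ((1 : B₀) ⊗ₜ[k] a * v) = (1 : B₀) ⊗ₜ[k] a * Br u v

variable {Br : B₀ ⊗[k] A → B₀ ⊗[k] A → B₀ ⊗[k] A} {P0 : B₀ → B₀ → B₀}

theorem reduction_bracket (hBr : IsBilinearBracket Br)
    (hP0 : ∀ x y, reduction ε (Br (x ⊗ₜ[k] 1) (y ⊗ₜ[k] 1)) = P0 x y) (u v : B₀ ⊗[k] A) :
    reduction ε (Br u v) = P0 (reduction ε u) (reduction ε v) := by
  rw [reduction_comp_eq ε (Br · v) (hBr.add_left · · v) (hBr.mul_left · · v),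
    reduction_comp_eq ε (Br _ ·) (hBr.add_right _) (hBr.mul_right · _), hP0]

theorem induced_bracket_add_left (hBr : IsBilinearBracket Br)
    (hP0 : ∀ x y, reduction ε (Br (x ⊗ₜ[k] 1) (y ⊗ₜ[k] 1)) = P0 x y) (x x' y : B₀) :
    P0 (x + x') y = P0 x y + P0 x' y := by
  rw [← hP0, ← hP0, ← hP0, add_tmul, hBr.add_left, map_add]

theorem induced_bracket_add_right (hBr : IsBilinearBracket Br)
    (hP0 : ∀ x y, reduction ε (Br (x ⊗ₜ[k] 1) (y ⊗ₜ[k] 1)) = P0 x y) (x y y' : B₀) :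
    P0 x (y + y') = P0 x y + P0 x y' := by
  rw [← hP0, ← hP0, ← hP0, add_tmul, hBr.add_right, map_add]

end Reduction

section PoissonDerivation

variable {k B₀ : Type*} [Field k] [CommRing B₀] [Algebra k B₀] {P0 : B₀ → B₀ → B₀}

theorem map_one_eq_zero_of_leibniz {P : B₀ →ₗ[k] B₀} (hP : ∀ x y, P (x * y) = x * P y + y * P x) :
    P 1 = 0 := by
  simpa using hP 1 1

theorem dCond_zero (hl : ∀ x x' y, P0 (x + x') y = P0 x y + P0 x' y)
    (hr : ∀ x y y', P0 x (y + y') = P0 x y + P0 x y') : DCond P0 (0 : B₀ →ₗ[k] B₀) := by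
  refine ⟨fun x y => by simp, fun x y => ?_⟩
  have h0l : P0 0 y = 0 := map_zero (AddMonoidHom.mk' (P0 · y) (hl · · y))
  have h0r : P0 x 0 = 0 := map_zero (AddMonoidHom.mk' (P0 x) (hr x))
  simp [h0l, h0r]

theorem DCond.add (hl : ∀ x x' y, P0 (x + x') y = P0 x y + P0 x' y)
    (hr : ∀ x y y', P0 x (y + y') = P0 x y + P0 x y') {P Q : B₀ →ₗ[k] B₀}
    (hP : DCond P0 P) (hQ : DCond P0 Q) : DCond P0 (P + Q) := by
  refine ⟨fun x y => ?_, fun x y => ?_⟩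
  · simp only [LinearMap.add_apply, hP.1, hQ.1]
    ring
  · simp only [LinearMap.add_apply, hP.2, hQ.2, hl, hr]
    abel

theorem DCond.neg (hl : ∀ x x' y, P0 (x + x') y = P0 x y + P0 x' y)
    (hr : ∀ x y y', P0 x (y + y') = P0 x y + P0 x y') {P : B₀ →ₗ[k] B₀}
    (hP : DCond P0 P) : DCond P0 (-P) := by
  refine ⟨fun x y => ?_, fun x y => ?_⟩
  · simp only [LinearMap.neg_apply, hP.1]
    ring
  · have hnl : P0 (-P x) y = -P0 (P x) y := map_neg (AddMonoidHom.mk' (P0 · y) (hl · · y)) _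
    have hnr : P0 x (-P y) = -P0 x (P y) := map_neg (AddMonoidHom.mk' (P0 x) (hr x)) _
    simp only [LinearMap.neg_apply, hP.2, hnl, hnr, neg_add]

end PoissonDerivation

section Theta

variable {k A B₀ : Type*} [Field k] [CommRing A] [Algebra k A] [CommRing B₀] [Algebra k B₀]
  {t : A}

theorem thetaFun_zero (u : B₀ ⊗[k] A) : thetaFun t (0 : B₀ →ₗ[k] B₀) u = u := by
  simp [thetaFun]

theorem thetaFun_add (htt : t * t = 0) (P Q : B₀ →ₗ[k] B₀) (u : B₀ ⊗[k] A) :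
    thetaFun t (P + Q) u = thetaFun t P (thetaFun t Q u) := by
  have hsq : TensorProduct.map P (LinearMap.mulLeft k t)
      (TensorProduct.map Q (LinearMap.mulLeft k t) u) = 0 := by
    rw [← LinearMap.comp_apply, ← TensorProduct.map_comp, ← LinearMap.mulLeft_mul, htt,
      LinearMap.mulLeft_zero_eq_zero, TensorProduct.map_zero_right, LinearMap.zero_apply]
  simp only [thetaFun, TensorProduct.map_add_left, LinearMap.add_apply, map_add, hsq]
  abel

variable {ε : A →ₐ[k] k} (ht : ∀ a, t * a = ε a • t)
include ht

theorem one_tmul_mul_eq (u : B₀ ⊗[k] A) :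
    (1 : B₀) ⊗ₜ[k] t * u = reduction ε u ⊗ₜ[k] t := by
  induction u using TensorProduct.induction_on with
  | zero => rw [mul_zero, map_zero, zero_tmul]
  | tmul x a => rw [Algebra.TensorProduct.tmul_mul_tmul, one_mul, ht, ← smul_tmul, reduction_tmul]
  | add u v hu hv => rw [mul_add, hu, hv, map_add, add_tmul]

theorem mul_tmul_eq (u : B₀ ⊗[k] A) (z : B₀) :
    u * z ⊗ₜ[k] t = (reduction ε u * z) ⊗ₜ[k] t := by
  rw [← one_tmul_mul_tmul_one, mul_left_comm, one_tmul_mul_eq ht, map_mul, reduction_tmul_one]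

theorem thetaFun_eq (P : B₀ →ₗ[k] B₀) (u : B₀ ⊗[k] A) :
    thetaFun t P u = u + P (reduction ε u) ⊗ₜ[k] t := by
  rw [thetaFun, add_right_inj]
  induction u using TensorProduct.induction_on with
  | zero => rw [map_zero, map_zero, map_zero, zero_tmul]
  | tmul x a => rw [TensorProduct.map_tmul, LinearMap.mulLeft_apply, ht, ← smul_tmul,
      reduction_tmul, map_smul]
  | add u v hu hv => rw [map_add, hu, hv, map_add, map_add, add_tmul]

variable (hεt : ε t = 0)
include hεt

theorem thetaFun_mul_sub_mul (P : B₀ →ₗ[k] B₀) (u v : B₀ ⊗[k] A) :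
    thetaFun t P (u * v) - thetaFun t P u * thetaFun t P v =
      (P (reduction ε u * reduction ε v) -
        (reduction ε u * P (reduction ε v) + reduction ε v * P (reduction ε u))) ⊗ₜ[k] t := by
  have hsq : P (reduction ε u) ⊗ₜ[k] t * P (reduction ε v) ⊗ₜ[k] t = 0 := by
    rw [Algebra.TensorProduct.tmul_mul_tmul, ht, hεt, zero_smul, tmul_zero]
  rw [thetaFun_eq ht, thetaFun_eq ht, thetaFun_eq ht, map_mul, add_mul, mul_add, mul_add, hsq,
    mul_tmul_eq ht, mul_comm (P (reduction ε u) ⊗ₜ[k] t), mul_tmul_eq ht, sub_tmul, add_tmul]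
  abel

theorem thetaFun_bracket_sub {Br : B₀ ⊗[k] A → B₀ ⊗[k] A → B₀ ⊗[k] A} {P0 : B₀ → B₀ → B₀}
    (hBr : IsBilinearBracket Br)
    (hred : ∀ u v, reduction ε (Br u v) = P0 (reduction ε u) (reduction ε v))
    (P : B₀ →ₗ[k] B₀) (u v : B₀ ⊗[k] A) :
    thetaFun t P (Br u v) - Br (thetaFun t P u) (thetaFun t P v) =
      (P (P0 (reduction ε u) (reduction ε v)) -
        (P0 (P (reduction ε u)) (reduction ε v) + P0 (reduction ε u) (P (reduction ε v))))
        ⊗ₜ[k] t := by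
  have tmul_left : ∀ z w, Br (z ⊗ₜ[k] t) w = P0 z (reduction ε w) ⊗ₜ[k] t := fun z w => by
    rw [← one_tmul_mul_tmul_one, hBr.mul_left, one_tmul_mul_eq ht, hred, reduction_tmul_one]
  have tmul_right : ∀ w z, Br w (z ⊗ₜ[k] t) = P0 (reduction ε w) z ⊗ₜ[k] t := fun w z => by
    rw [← one_tmul_mul_tmul_one, hBr.mul_right, one_tmul_mul_eq ht, hred, reduction_tmul_one]
  have tmul_tmul : ∀ z z', Br (z ⊗ₜ[k] t) (z' ⊗ₜ[k] t) = 0 := fun z z' => by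
    rw [← one_tmul_mul_tmul_one z, ← one_tmul_mul_tmul_one z', hBr.mul_left, hBr.mul_right,
      ← mul_assoc, Algebra.TensorProduct.tmul_mul_tmul, ht, hεt, zero_smul, tmul_zero, zero_mul]
  rw [thetaFun_eq ht, thetaFun_eq ht, thetaFun_eq ht, hBr.add_left, hBr.add_right,
    hBr.add_right, tmul_tmul, tmul_left, tmul_right, hred, sub_tmul, add_tmul]
  abel

end Theta

section LeftInverse

variable {k M N : Type*} [Field k] [AddCommGroup M] [Module k M] [AddCommGroup N] [Module k N]
  {t : N}

theorem exists_leftInverse_tmul (ht0 : t ≠ 0) :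
    ∃ g : M ⊗[k] N →ₗ[k] M, ∀ x, g (x ⊗ₜ[k] t) = x := by
  obtain ⟨φ, hφ⟩ := Module.Projective.exists_dual_eq_one k ht0
  exact ⟨(TensorProduct.rid k M).toLinearMap ∘ₗ TensorProduct.map LinearMap.id φ,
    fun x => by simp [hφ]⟩

theorem tmul_left_injective (ht0 : t ≠ 0) : Function.Injective (· ⊗ₜ[k] t : M → M ⊗[k] N) := by
  obtain ⟨g, hg⟩ := exists_leftInverse_tmul (k := k) (M := M) ht0
  exact Function.LeftInverse.injective hg

end LeftInverse

section Automorphism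

variable {k A B₀ : Type*} [Field k] [CommRing A] [Algebra k A] [CommRing B₀] [Algebra k B₀]
  {t : A} {Br : B₀ ⊗[k] A → B₀ ⊗[k] A → B₀ ⊗[k] A}

theorem sCond_refl : SCond t Br (RingEquiv.refl (B₀ ⊗[k] A)) :=
  ⟨fun _ => rfl, fun _ _ => rfl, fun _ => ⟨0, by rw [RingEquiv.refl_apply, sub_self, zero_tmul]⟩⟩

theorem SCond.trans {θ₁ θ₂ : B₀ ⊗[k] A ≃+* B₀ ⊗[k] A} (h₁ : SCond t Br θ₁)
    (h₂ : SCond t Br θ₂) : SCond t Br (θ₁.trans θ₂) := by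
  refine ⟨fun a => ?_, fun u v => ?_, fun u => ?_⟩
  · rw [RingEquiv.trans_apply, h₁.1, h₂.1]
  · simp only [RingEquiv.trans_apply, h₁.2.1, h₂.2.1]
  · obtain ⟨x₁, hx₁⟩ := h₁.2.2 u
    obtain ⟨x₂, hx₂⟩ := h₂.2.2 (θ₁ u)
    refine ⟨x₂ + x₁, ?_⟩
    rw [RingEquiv.trans_apply, add_tmul, ← hx₁, ← hx₂]
    abel

theorem SCond.symm {θ : B₀ ⊗[k] A ≃+* B₀ ⊗[k] A} (h : SCond t Br θ) : SCond t Br θ.symm := by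
  refine ⟨fun a => θ.injective ?_, fun u v => θ.injective ?_, fun u => ?_⟩
  · rw [RingEquiv.apply_symm_apply, h.1]
  · simp only [RingEquiv.apply_symm_apply, h.2.1]
  · obtain ⟨x, hx⟩ := h.2.2 (θ.symm u)
    refine ⟨-x, ?_⟩
    rw [neg_tmul, ← hx, RingEquiv.apply_symm_apply, neg_sub]

theorem exists_ringEquiv_thetaFun {ε : A →ₐ[k] k} (ht : ∀ a, t * a = ε a • t) (hεt : ε t = 0)
    {P0 : B₀ → B₀ → B₀} (hBr : IsBilinearBracket Br)
    (hred : ∀ u v, reduction ε (Br u v) = P0 (reduction ε u) (reduction ε v))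
    {P : B₀ →ₗ[k] B₀} (hP : DCond P0 P) :
    ∃ θ : B₀ ⊗[k] A ≃+* B₀ ⊗[k] A, (∀ u, θ u = thetaFun t P u) ∧ SCond t Br θ := by
  have htt : t * t = 0 := by rw [ht, hεt, zero_smul]
  let θ : B₀ ⊗[k] A ≃+* B₀ ⊗[k] A :=
    { toFun := thetaFun t P
      invFun := thetaFun t (-P)
      left_inv := fun u => by rw [← thetaFun_add htt, neg_add_cancel, thetaFun_zero]
      right_inv := fun u => by rw [← thetaFun_add htt, add_neg_cancel, thetaFun_zero]
      map_mul' := fun u v => sub_eq_zero.1 <| by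
        rw [thetaFun_mul_sub_mul ht hεt, hP.1, sub_self, zero_tmul]
      map_add' := fun u v => by
        simp only [thetaFun, map_add]
        abel }
  refine ⟨θ, fun _ => rfl, fun a => ?_, fun u v => sub_eq_zero.1 ?_,
    fun u => ⟨P (reduction ε u), ?_⟩⟩
  · change thetaFun t P ((1 : B₀) ⊗ₜ[k] a) = (1 : B₀) ⊗ₜ[k] a
    rw [thetaFun_eq ht, reduction_tmul, map_smul, map_one_eq_zero_of_leibniz hP.1, smul_zero,
      zero_tmul, add_zero]
  · change thetaFun t P _ - Br (thetaFun t P _) (thetaFun t P _) = 0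
    rw [thetaFun_bracket_sub ht hεt hBr hred, hP.2, sub_self, zero_tmul]
  · change thetaFun t P u - u = _
    rw [thetaFun_eq ht, add_sub_cancel_left]

theorem SCond.exists_eq_thetaFun (ht0 : t ≠ 0) {θ : B₀ ⊗[k] A ≃+* B₀ ⊗[k] A}
    (hθ : SCond t Br θ) : ∃ P : B₀ →ₗ[k] B₀, ∀ u, θ u = thetaFun t P u := by
  obtain ⟨g, hg⟩ := exists_leftInverse_tmul (k := k) (M := B₀) ht0
  have hθa : ∀ (a : A) u, θ ((1 : B₀) ⊗ₜ[k] a * u) = (1 : B₀) ⊗ₜ[k] a * θ u := fun a u => by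
    rw [map_mul, hθ.1]
  let θₗ : B₀ ⊗[k] A →ₗ[k] B₀ ⊗[k] A :=
    (AlgEquiv.ofRingEquiv (f := θ) fun c => by
      rw [Algebra.TensorProduct.algebraMap_apply', hθ.1]).toLinearMap
  refine ⟨g ∘ₗ (θₗ - LinearMap.id) ∘ₗ (TensorProduct.mk k B₀ A).flip 1, fun u => ?_⟩
  induction u using TensorProduct.induction_on with
  | zero => simp [thetaFun]
  | tmul x a =>
    obtain ⟨s, hs⟩ := hθ.2.2 (x ⊗ₜ[k] 1)
    calc θ (x ⊗ₜ[k] a) = (1 : B₀) ⊗ₜ[k] a * (x ⊗ₜ[k] 1 + s ⊗ₜ[k] t) := by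
          rw [← one_tmul_mul_tmul_one, hθa, ← hs, add_sub_cancel]
      _ = x ⊗ₜ[k] a + s ⊗ₜ[k] (t * a) := by
          rw [mul_add, one_tmul_mul_tmul_one, Algebra.TensorProduct.tmul_mul_tmul, one_mul,
            mul_comm]
      _ = _ := by simp [thetaFun, θₗ, hs, hg]
  | add u v hu hv => simp only [thetaFun, map_add, hu, hv]; abel

theorem SCond.existsUnique_dCond {ε : A →ₐ[k] k} (ht : ∀ a, t * a = ε a • t) (hεt : ε t = 0)
    (ht0 : t ≠ 0) {P0 : B₀ → B₀ → B₀} (hBr : IsBilinearBracket Br)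
    (hred : ∀ u v, reduction ε (Br u v) = P0 (reduction ε u) (reduction ε v))
    {θ : B₀ ⊗[k] A ≃+* B₀ ⊗[k] A} (hθ : SCond t Br θ) :
    ∃! P : B₀ →ₗ[k] B₀, DCond P0 P ∧ ∀ x, θ (x ⊗ₜ[k] 1) = x ⊗ₜ[k] 1 + P x ⊗ₜ[k] t := by
  obtain ⟨P, hθP⟩ := hθ.exists_eq_thetaFun ht0
  have hx : ∀ x, θ (x ⊗ₜ[k] 1) = x ⊗ₜ[k] 1 + P x ⊗ₜ[k] t := fun x => by
    rw [hθP, thetaFun_eq ht, reduction_tmul_one]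
  have eq_of_tmul_eq_zero : ∀ y z : B₀, (y - z) ⊗ₜ[k] t = 0 → y = z := fun y z h =>
    sub_eq_zero.1 (tmul_left_injective (k := k) ht0 (h.trans (zero_tmul _ _).symm))
  refine ⟨P, ⟨⟨fun x y => eq_of_tmul_eq_zero _ _ ?_, fun x y => eq_of_tmul_eq_zero _ _ ?_⟩, hx⟩,
    fun Q hQ => LinearMap.ext fun x => tmul_left_injective (k := k) ht0 ?_⟩
  · have h := thetaFun_mul_sub_mul ht hεt P (x ⊗ₜ[k] 1) (y ⊗ₜ[k] 1)
    rwa [← hθP, ← hθP, ← hθP, map_mul, sub_self, reduction_tmul_one, reduction_tmul_one,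
      eq_comm] at h
  · have h := thetaFun_bracket_sub ht hεt hBr hred P (x ⊗ₜ[k] 1) (y ⊗ₜ[k] 1)
    rwa [← hθP, ← hθP, ← hθP, hθ.2.1, sub_self, reduction_tmul_one, reduction_tmul_one,
      eq_comm] at h
  · exact add_left_cancel ((hQ.2 x).symm.trans (hx x))

end Automorphism

theorem stmt1_general (k Atil B₀ : Type*) [Field k] [CommRing Atil] [Algebra k Atil]
    [CommRing B₀] [Algebra k B₀]
    (mtil : Ideal Atil)
    (hres : Function.Bijective ((Ideal.Quotient.mk mtil).comp (algebraMap k Atil)))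
    (t : Atil) (htmem : t ∈ mtil) (ht0 : t ≠ 0) (htann : ∀ x ∈ mtil, t * x = 0)
    (P : B₀ ⊗[k] Atil → B₀ ⊗[k] Atil → B₀ ⊗[k] Atil)
    -- `P` is an `Ã`-bilinear Poisson bracket on `B = B₀ ⊗ Ã`
    (haddl : ∀ u v w : B₀ ⊗[k] Atil, P (u + v) w = P u w + P v w)
    (haddr : ∀ u v w : B₀ ⊗[k] Atil, P u (v + w) = P u v + P u w)
    (hlinl : ∀ (a : Atil) (u v : B₀ ⊗[k] Atil),
      P (((1 : B₀) ⊗ₜ[k] a) * u) v = ((1 : B₀) ⊗ₜ[k] a) * P u v)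
    (hlinr : ∀ (a : Atil) (u v : B₀ ⊗[k] Atil),
      P u (((1 : B₀) ⊗ₜ[k] a) * v) = ((1 : B₀) ⊗ₜ[k] a) * P u v)
    -- `P0` is the induced Poisson bracket on `B₀` (modulo `B₀ ⊗ m̃`)
    (P0 : B₀ → B₀ → B₀)
    (hP0 : ∀ x y : B₀,
      P (x ⊗ₜ[k] 1) (y ⊗ₜ[k] 1) - P0 x y ⊗ₜ[k] 1 ∈
        Submodule.span k {w : B₀ ⊗[k] Atil | ∃ (z : B₀) (a : Atil), a ∈ mtil ∧ w = z ⊗ₜ[k] a}) :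
    -- the automorphisms in question form a group under composition
    (SCond t P (RingEquiv.refl (B₀ ⊗[k] Atil))) ∧
    (∀ θ₁ θ₂ : B₀ ⊗[k] Atil ≃+* B₀ ⊗[k] Atil,
      SCond t P θ₁ → SCond t P θ₂ → SCond t P (θ₁.trans θ₂)) ∧
    (∀ θ : B₀ ⊗[k] Atil ≃+* B₀ ⊗[k] Atil, SCond t P θ → SCond t P θ.symm) ∧
    -- the Poisson `k`-derivations of `B₀` form an additive group
    (DCond P0 (0 : B₀ →ₗ[k] B₀)) ∧
    (∀ P' Q' : B₀ →ₗ[k] B₀, DCond P0 P' → DCond P0 Q' → DCond P0 (P' + Q')) ∧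
    (∀ P' : B₀ →ₗ[k] B₀, DCond P0 P' → DCond P0 (-P')) ∧
    -- `P ↦ θ_P` is a homomorphism: it sends sums to compositions
    (∀ P' Q' : B₀ →ₗ[k] B₀, DCond P0 P' → DCond P0 Q' →
      ∀ u : B₀ ⊗[k] Atil, thetaFun t (P' + Q') u = thetaFun t P' (thetaFun t Q' u)) ∧
    -- `P ↦ θ_P` lands in the group of automorphisms in question
    (∀ P' : B₀ →ₗ[k] B₀, DCond P0 P' →
      ∃ θ : B₀ ⊗[k] Atil ≃+* B₀ ⊗[k] Atil,
        (∀ u : B₀ ⊗[k] Atil, θ u = thetaFun t P' u) ∧ SCond t P θ) ∧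
    -- and `P ↦ θ_P` is bijective onto that group
    (∀ θ : B₀ ⊗[k] Atil ≃+* B₀ ⊗[k] Atil, SCond t P θ →
      ∃! P' : B₀ →ₗ[k] B₀, DCond P0 P' ∧
        ∀ x : B₀, θ (x ⊗ₜ[k] 1) = x ⊗ₜ[k] 1 + P' x ⊗ₜ[k] t) := by
  rw [Ideal.Quotient.mk_comp_algebraMap] at hres
  set ε := residueAlgHom hres
  have ht : ∀ a, t * a = ε a • t := mul_eq_residueAlgHom_smul hres htann
  have hεt : ε t = 0 := residueAlgHom_eq_zero_of_mem hres htmem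
  have hP0ε : ∀ x y, reduction ε (P (x ⊗ₜ[k] 1) (y ⊗ₜ[k] 1)) = P0 x y := fun x y => by
    have h := span_le_ker_reduction ε (fun _ => residueAlgHom_eq_zero_of_mem hres) (hP0 x y)
    rwa [LinearMap.mem_ker, AlgHom.toLinearMap_apply, map_sub, reduction_tmul_one,
      sub_eq_zero] at h
  have hBr : IsBilinearBracket P := ⟨haddl, haddr, hlinl, hlinr⟩
  have hred := reduction_bracket ε hBr hP0ε
  have hl := induced_bracket_add_left ε hBr hP0ε
  have hr := induced_bracket_add_right ε hBr hP0ε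
  exact ⟨sCond_refl, fun _ _ => SCond.trans, fun _ => SCond.symm, dCond_zero hl hr,
    fun _ _ => DCond.add hl hr, fun _ => DCond.neg hl hr,
    fun P' Q' _ _ => thetaFun_add (by rw [ht, hεt, zero_smul]) P' Q',
    fun _ => exists_ringEquiv_thetaFun ht hεt hBr hred,
    fun _ => SCond.existsUnique_dCond ht hεt ht0 hBr hred⟩

/-- Over a small extension `(Ã, m̃, t)` and a Poisson `Ã`-algebra structure `P` on
`B = B₀ ⊗ Ã` with induced bracket `P0` on `B₀`: the Poisson `Ã`-algebra automorphisms of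
`(B, P)` inducing the identity modulo `B₀ ⊗ (t)` form a group under composition, and
`P ↦ θ_P` is a group isomorphism onto this group from the additive group of Poisson
`k`-derivations of `(B₀, P0)`. -/
theorem stmt1 (k Atil B₀ : Type*) [Field k] [CommRing Atil] [Algebra k Atil]
    [CommRing B₀] [Algebra k B₀]
    (mtil : Ideal Atil)
    (hres : Function.Bijective ((Ideal.Quotient.mk mtil).comp (algebraMap k Atil)))
    (t : Atil) (htmem : t ∈ mtil) (ht0 : t ≠ 0) (htann : ∀ x ∈ mtil, t * x = 0)
    (P : B₀ ⊗[k] Atil → B₀ ⊗[k] Atil → B₀ ⊗[k] Atil)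
    -- `P` is an `Ã`-bilinear Poisson bracket on `B = B₀ ⊗ Ã`
    (haddl : ∀ u v w : B₀ ⊗[k] Atil, P (u + v) w = P u w + P v w)
    (haddr : ∀ u v w : B₀ ⊗[k] Atil, P u (v + w) = P u v + P u w)
    (hlinl : ∀ (a : Atil) (u v : B₀ ⊗[k] Atil),
      P (((1 : B₀) ⊗ₜ[k] a) * u) v = ((1 : B₀) ⊗ₜ[k] a) * P u v)
    (hlinr : ∀ (a : Atil) (u v : B₀ ⊗[k] Atil),
      P u (((1 : B₀) ⊗ₜ[k] a) * v) = ((1 : B₀) ⊗ₜ[k] a) * P u v)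
    (hanti : ∀ u v : B₀ ⊗[k] Atil, P u v = -P v u)
    (hjac : ∀ u v w : B₀ ⊗[k] Atil, P u (P v w) = P (P u v) w + P v (P u w))
    (hleib : ∀ u v w : B₀ ⊗[k] Atil, P u (v * w) = v * P u w + w * P u v)
    -- `P0` is the induced Poisson bracket on `B₀` (modulo `B₀ ⊗ m̃`)
    (P0 : B₀ → B₀ → B₀)
    (hP0 : ∀ x y : B₀,
      P (x ⊗ₜ[k] 1) (y ⊗ₜ[k] 1) - P0 x y ⊗ₜ[k] 1 ∈
        Submodule.span k {w : B₀ ⊗[k] Atil | ∃ (z : B₀) (a : Atil), a ∈ mtil ∧ w = z ⊗ₜ[k] a}) :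
    -- the automorphisms in question form a group under composition
    (SCond t P (RingEquiv.refl (B₀ ⊗[k] Atil))) ∧
    (∀ θ₁ θ₂ : B₀ ⊗[k] Atil ≃+* B₀ ⊗[k] Atil,
      SCond t P θ₁ → SCond t P θ₂ → SCond t P (θ₁.trans θ₂)) ∧
    (∀ θ : B₀ ⊗[k] Atil ≃+* B₀ ⊗[k] Atil, SCond t P θ → SCond t P θ.symm) ∧
    -- the Poisson `k`-derivations of `B₀` form an additive group
    (DCond P0 (0 : B₀ →ₗ[k] B₀)) ∧
    (∀ P' Q' : B₀ →ₗ[k] B₀, DCond P0 P' → DCond P0 Q' → DCond P0 (P' + Q')) ∧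
    (∀ P' : B₀ →ₗ[k] B₀, DCond P0 P' → DCond P0 (-P')) ∧
    -- `P ↦ θ_P` is a homomorphism: it sends sums to compositions
    (∀ P' Q' : B₀ →ₗ[k] B₀, DCond P0 P' → DCond P0 Q' →
      ∀ u : B₀ ⊗[k] Atil, thetaFun t (P' + Q') u = thetaFun t P' (thetaFun t Q' u)) ∧
    -- `P ↦ θ_P` lands in the group of automorphisms in question
    (∀ P' : B₀ →ₗ[k] B₀, DCond P0 P' →
      ∃ θ : B₀ ⊗[k] Atil ≃+* B₀ ⊗[k] Atil,
        (∀ u : B₀ ⊗[k] Atil, θ u = thetaFun t P' u) ∧ SCond t P θ) ∧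
    -- and `P ↦ θ_P` is bijective onto that group
    (∀ θ : B₀ ⊗[k] Atil ≃+* B₀ ⊗[k] Atil, SCond t P θ →
      ∃! P' : B₀ →ₗ[k] B₀, DCond P0 P' ∧
        ∀ x : B₀, θ (x ⊗ₜ[k] 1) = x ⊗ₜ[k] 1 + P' x ⊗ₜ[k] t) :=
  stmt1_general k Atil B₀ mtil hres t htmem ht0 htann P haddl haddr hlinl hlinr P0 hP0
end

section
/- Let k be a field, (B, {-,-}) a Poisson k-algebra, and I ⊆ B a Poisson ideal, so that B/I is a Poisson k-algebra and B/I carries the Poisson B-module operation {b, y + I} := {b,y} + I. Let B' := B × B with multiplication (a,b)·(c,d) = (ac, ad + bc) and bracket {(a,b),(c,d)} := ({a,c}, {a,d} + {b,c}) (so B' = B[ε] with ε = (0,1), ε² = 0), and let π : B' → B be (a,b) ↦ a. Then the assignment φ ↦ I'_φ := {(x,y) ∈ B' : x ∈ I and y + I = φ(x)} is a bijection from the set of B-module homomorphisms φ : I → B/I satisfying φ({b,x}) = {b, φ(x)} for all b ∈ B and x ∈ I, onto the set of ideals I' of B' such that {u, v} ∈ I' for all u ∈ B' and v ∈ I', π(I')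 = I, and {y ∈ B : (0,y) ∈ I'} = I (this last condition being equivalent to flatness of B'/I' over k[ε]). Under this bijection, φ = 0 corresponds to I' = I × I. -/
/-- The condition that `φ : I → B/I` is a homomorphism of Poisson `B`-modules, where `Pq` is
the induced Poisson module operation of `B` on `B/I`. -/
def PoissonModHom {B : Type*} [CommRing B]
    (P : B → B → B) (I : Ideal B) (hI : ∀ b : B, ∀ x ∈ I, P b x ∈ I)
    (Pq : B → B ⧸ I → B ⧸ I) (φ : I → B ⧸ I) : Prop :=
  (∀ x y : I, φ (x + y) = φ x + φ y) ∧
  (∀ (b : B) (x : I), φ (b • x) = b • φ x) ∧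
  (∀ (b : B) (x : I), φ ⟨P b (x : B), hI b (x : B) x.2⟩ = Pq b (φ x))

/-- The condition that a subset `I'` of `B' = B[ε]` (realized as `B × B` with multiplication
`(a,b)(c,d) = (ac, ad + bc)` and bracket `{(a,b),(c,d)} = ({a,c}, {a,d} + {b,c})`) is a
Poisson ideal of `B'` lifting `I` flatly: it is an ideal, is closed under bracketing with
arbitrary elements, projects onto `I`, and `{y | (0,y) ∈ I'} = I` (flatness over `k[ε]`). -/
def DeformIdeal {B : Type*} [CommRing B]
    (P : B → B → B) (I : Ideal B) (I' : Set (B × B)) : Prop :=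
  (0 : B × B) ∈ I' ∧
  (∀ u ∈ I', ∀ v ∈ I', u + v ∈ I') ∧
  (∀ u : B × B, ∀ v ∈ I', ((u.1 * v.1, u.1 * v.2 + u.2 * v.1) : B × B) ∈ I') ∧
  (∀ u : B × B, ∀ v ∈ I', ((P u.1 v.1, P u.1 v.2 + P u.2 v.1) : B × B) ∈ I') ∧
  Prod.fst '' I' = (I : Set B) ∧
  {y : B | ((0 : B), y) ∈ I'} = (I : Set B)

/-- The subset `I'_φ = {(x,y) : x ∈ I, y + I = φ(x)}` of `B × B` associated to
`φ : I → B/I`. -/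
def idealOfHom {B : Type*} [CommRing B] (I : Ideal B) (φ : I → B ⧸ I) : Set (B × B) :=
  {p : B × B | ∃ h : p.1 ∈ I, Ideal.Quotient.mk I p.2 = φ ⟨p.1, h⟩}

/-!
A flat lift `I'` of `I` meets `{0} × B` exactly in `{0} × I`, so over each `x ∈ I` it meets the
fibre `{x} × B` in a single coset `{x} × (y + I)`; sending `x` to `y + I` is the homomorphism
`φ` with `I' = I'_φ`. Closure of `I'` under multiplication and bracket by elements `(b, 0)`
is exactly `B`-linearity and bracket compatibility of `φ`; the extra `ε`-terms coming from
elements `(0, b')` lie in `I` because `I` is a Poisson ideal.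
-/

section

variable {B : Type*} [CommRing B] {P : B → B → B} {I : Ideal B}

theorem PoissonModHom.map_zero {hI : ∀ b : B, ∀ x ∈ I, P b x ∈ I} {Pq : B → B ⧸ I → B ⧸ I}
    {φ : I → B ⧸ I} (hφ : PoissonModHom P I hI Pq φ) : φ 0 = 0 := by
  simpa using (hφ.1 0 0).symm

theorem fst_image_idealOfHom (φ : I → B ⧸ I) : Prod.fst '' idealOfHom I φ = I := by
  ext x
  refine ⟨fun ⟨p, ⟨hp, _⟩, hpx⟩ => hpx ▸ hp, fun hx => ?_⟩
  obtain ⟨y, hy⟩ := Ideal.Quotient.mk_surjective (φ ⟨x, hx⟩)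
  exact ⟨(x, y), ⟨hx, hy⟩, rfl⟩

theorem zero_mem_idealOfHom_iff {φ : I → B ⧸ I} (hφ : φ 0 = 0) (y : B) :
    ((0 : B), y) ∈ idealOfHom I φ ↔ y ∈ I := by
  rw [← Ideal.Quotient.eq_zero_iff_mem]
  exact ⟨fun ⟨_, h⟩ => h.trans hφ, fun h => ⟨I.zero_mem, h.trans hφ.symm⟩⟩

theorem idealOfHom_injective : Function.Injective (idealOfHom I) := by
  intro φ ψ h
  funext x
  obtain ⟨y, hy⟩ := Ideal.Quotient.mk_surjective (φ x)
  obtain ⟨_, hψ⟩ : ((x : B), y) ∈ idealOfHom I ψ := h ▸ ⟨x.2, hy⟩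
  exact hy.symm.trans hψ

theorem idealOfHom_zero :
    idealOfHom I (fun _ => (0 : B ⧸ I)) = {p : B × B | p.1 ∈ I ∧ p.2 ∈ I} := by
  ext p
  simp [idealOfHom, Ideal.Quotient.eq_zero_iff_mem]

theorem deformIdeal_idealOfHom (hI : ∀ b : B, ∀ x ∈ I, P b x ∈ I) {Pq : B → B ⧸ I → B ⧸ I}
    (hPq : ∀ b y : B, Pq b (Ideal.Quotient.mk I y) = Ideal.Quotient.mk I (P b y))
    {φ : I → B ⧸ I} (hφ : PoissonModHom P I hI Pq φ) : DeformIdeal P I (idealOfHom I φ) := by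
  have hφ0 := hφ.map_zero
  obtain ⟨hadd, hsmul, hbr⟩ := hφ
  refine ⟨(zero_mem_idealOfHom_iff hφ0 0).2 I.zero_mem, ?_, ?_, ?_, fst_image_idealOfHom φ,
    Set.ext (zero_mem_idealOfHom_iff hφ0)⟩
  · rintro u ⟨hu, hu'⟩ v ⟨hv, hv'⟩
    refine ⟨I.add_mem hu hv, ?_⟩
    rw [Prod.snd_add, map_add, hu', hv']
    exact (hadd ⟨u.1, hu⟩ ⟨v.1, hv⟩).symm
  · rintro u v ⟨hv, hv'⟩
    refine ⟨I.mul_mem_left u.1 hv, ?_⟩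
    rw [map_add, Ideal.Quotient.eq_zero_iff_mem.2 (I.mul_mem_left u.2 hv), add_zero]
    exact (congrArg (u.1 • ·) hv').trans (hsmul u.1 ⟨v.1, hv⟩).symm
  · rintro u v ⟨hv, hv'⟩
    refine ⟨hI u.1 v.1 hv, ?_⟩
    rw [map_add, Ideal.Quotient.eq_zero_iff_mem.2 (hI u.2 v.1 hv), add_zero, ← hPq, hv']
    exact (hbr u.1 ⟨v.1, hv⟩).symm

namespace DeformIdeal

variable {I' : Set (B × B)}

theorem sub_mem (hI' : DeformIdeal P I I') {u v : B × B} (hu : u ∈ I') (hv : v ∈ I') : u - v ∈ I' := by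
  have hneg : (-v.1, -v.2) ∈ I' := by simpa using hI'.2.2.1 (-1, 0) v hv
  rw [sub_eq_add_neg]
  exact hI'.2.1 u hu (-v) hneg

theorem mk_mem_iff (hI' : DeformIdeal P I I') {x y : B} (hxy : (x, y) ∈ I') (z : B) : (x, z) ∈ I' ↔ z - y ∈ I := by
  rw [← SetLike.mem_coe, ← hI'.2.2.2.2.2]
  constructor
  · intro hxz
    simpa using hI'.sub_mem hxz hxy
  · intro h
    simpa using hI'.2.1 _ hxy _ h

theorem exists_mk_mem (hI' : DeformIdeal P I I') (x : I) : ∃ y, ((x : B), y) ∈ I' := by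
  obtain ⟨p, hp, hpx⟩ : (x : B) ∈ Prod.fst '' I' := hI'.2.2.2.2.1 ▸ x.2
  exact ⟨p.2, hpx ▸ hp⟩

noncomputable def toHom (hI' : DeformIdeal P I I') (x : I) : B ⧸ I :=
  Ideal.Quotient.mk I (hI'.exists_mk_mem x).choose

theorem toHom_eq (hI' : DeformIdeal P I I') {x : I} {y : B} (hxy : ((x : B), y) ∈ I') :
    hI'.toHom x = Ideal.Quotient.mk I y :=
  Ideal.Quotient.eq.2 <| (hI'.mk_mem_iff hxy _).1 (hI'.exists_mk_mem x).choose_spec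

theorem eq_idealOfHom (hI' : DeformIdeal P I I') : I' = idealOfHom I hI'.toHom := by
  ext ⟨x, y⟩
  constructor
  · intro hxy
    have hx : x ∈ I := by
      rw [← SetLike.mem_coe, ← hI'.2.2.2.2.1]
      exact ⟨_, hxy, rfl⟩
    exact ⟨hx, (hI'.toHom_eq (x := ⟨x, hx⟩) hxy).symm⟩
  · rintro ⟨hx, hy⟩
    exact (hI'.mk_mem_iff (hI'.exists_mk_mem ⟨x, hx⟩).choose_spec y).2 (Ideal.Quotient.eq.1 hy)

theorem poissonModHom_toHom (hI' : DeformIdeal P I I') (hI : ∀ b : B, ∀ x ∈ I, P b x ∈ I)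
    {Pq : B → B ⧸ I → B ⧸ I}
    (hPq : ∀ b y : B, Pq b (Ideal.Quotient.mk I y) = Ideal.Quotient.mk I (P b y)) :
    PoissonModHom P I hI Pq hI'.toHom := by
  have hc (x : I) := (hI'.exists_mk_mem x).choose_spec
  refine ⟨fun x y => ?_, fun b x => ?_, fun b x => ?_⟩
  · rw [hI'.toHom_eq (x := x + y) (hI'.2.1 _ (hc x) _ (hc y)), map_add]
    rfl
  · have hbx := hI'.2.2.1 (b, 0) _ (hc x)
    rw [zero_mul, add_zero] at hbx
    rw [hI'.toHom_eq (x := b • x) hbx]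
    rfl
  · have hbx := hI'.2.2.2.1 (b, 0) _ (hc x)
    rw [hI'.toHom_eq (x := ⟨P b x, hI b x x.2⟩) hbx, map_add,
      Ideal.Quotient.eq_zero_iff_mem.2 (hI 0 x x.2), add_zero, ← hPq]
    rfl

end DeformIdeal

end

theorem stmt2_general (B : Type*) [CommRing B]
    (P : B → B → B)
    -- the Poisson ideal `I` and the induced Poisson module operation on `B ⧸ I`
    (I : Ideal B) (hI : ∀ b : B, ∀ x ∈ I, P b x ∈ I)
    (Pq : B → B ⧸ I → B ⧸ I)
    (hPq : ∀ b y : B, Pq b (Ideal.Quotient.mk I y) = Ideal.Quotient.mk I (P b y)) :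
    (∀ φ : I → B ⧸ I, PoissonModHom P I hI Pq φ → DeformIdeal P I (idealOfHom I φ)) ∧
    (∀ I' : Set (B × B), DeformIdeal P I I' →
      ∃! φ : I → B ⧸ I, PoissonModHom P I hI Pq φ ∧ I' = idealOfHom I φ) ∧
    (idealOfHom I (fun _ => (0 : B ⧸ I)) = {p : B × B | p.1 ∈ I ∧ p.2 ∈ I}) :=
  ⟨fun _ hφ => deformIdeal_idealOfHom hI hPq hφ,
    fun _ hI' => ⟨hI'.toHom, ⟨hI'.poissonModHom_toHom hI hPq, hI'.eq_idealOfHom⟩,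
      fun _ ⟨_, hψ⟩ => idealOfHom_injective (hψ.symm.trans hI'.eq_idealOfHom)⟩,
    idealOfHom_zero⟩

/-- First-order Poisson deformations of the Poisson subscheme defined by a Poisson ideal `I`
of a Poisson `k`-algebra `B`: the assignment `φ ↦ I'_φ` is a bijection from Poisson
`B`-module homomorphisms `I → B/I` onto Poisson ideals of `B[ε]` lifting `I` flatly, with
`φ = 0` corresponding to the trivial deformation `I × I`. -/
theorem stmt2 (k B : Type*) [Field k] [CommRing B] [Algebra k B]
    (P : B → B → B)
    -- `(B, P)` is a Poisson `k`-algebra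
    (hPaddl : ∀ a b c : B, P (a + b) c = P a c + P b c)
    (hPaddr : ∀ a b c : B, P a (b + c) = P a b + P a c)
    (hPsmull : ∀ (r : k) (a b : B), P (r • a) b = r • P a b)
    (hPsmulr : ∀ (r : k) (a b : B), P a (r • b) = r • P a b)
    (hPanti : ∀ a b : B, P a b = -P b a)
    (hPjac : ∀ a b c : B, P a (P b c) = P (P a b) c + P b (P a c))
    (hPleib : ∀ a b c : B, P a (b * c) = b * P a c + c * P a b)
    -- the Poisson ideal `I` and the induced Poisson module operation on `B ⧸ I`
    (I : Ideal B) (hI : ∀ b : B, ∀ x ∈ I, P b x ∈ I)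
    (Pq : B → B ⧸ I → B ⧸ I)
    (hPq : ∀ b y : B, Pq b (Ideal.Quotient.mk I y) = Ideal.Quotient.mk I (P b y)) :
    (∀ φ : I → B ⧸ I, PoissonModHom P I hI Pq φ → DeformIdeal P I (idealOfHom I φ)) ∧
    (∀ I' : Set (B × B), DeformIdeal P I I' →
      ∃! φ : I → B ⧸ I, PoissonModHom P I hI Pq φ ∧ I' = idealOfHom I φ) ∧
    (idealOfHom I (fun _ => (0 : B ⧸ I)) = {p : B × B | p.1 ∈ I ∧ p.2 ∈ I}) :=
  stmt2_general B P I hI Pq hPq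
end

section
/- Let k be a field, let (B, {-,-}) and (B₀, {-,-}₀) be Poisson k-algebras, let φ : B → B₀ be a surjective Poisson k-algebra homomorphism, and let j : B₀ → B be an injective k-linear map with image equal to ker(φ) such that j(φ(b)·x) = b·j(x) and j({φ(b), x}₀) = {b, j(x)} for all b ∈ B and x ∈ B₀. Set e := j(1). Then: (i) e² = 0; (ii) {b, e} = 0 for every b ∈ B; (iii) ker(φ) = e·B; and (iv) {b ∈ B : e·b = 0} = e·B. Consequently the ring homomorphism k[X]/(X²) → B sending X to e makes B into a k[ε]-algebra which is flat over k[ε] and whose bracket is k[ε]-bilinear. -/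
/-!
Put `e = j 1`. The module condition on `j` gives `j (φ b) = b * e`, so `ker φ = range j = e B`,
`e² = j (φ e) = 0`, and `e b = 0 ↔ j (φ b) = 0 ↔ φ b = 0 ↔ b ∈ e B` by injectivity of `j`.
Leibniz forces `{a, 1}₀ = 0`, hence `{b, e} = j {φ b, 1}₀ = 0`: `e` is Poisson-central, which makes
the bracket `k[ε]`-bilinear. Since the only ideals of `k[ε]` are `0`, `(ε)` and `k[ε]`, flatness
reduces to injectivity of `(ε) ⊗ B → B`, and as `(ε) ⊗ B` consists of the tensors `ε ⊗ b`, this is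
exactly `ann e = e B`.
-/

open TensorProduct DualNumber

theorem Ideal.exists_eq_tmul_of_span_singleton {R M : Type*} [CommRing R] [AddCommGroup M]
    [Module R M] (a : R) (z : Ideal.span {a} ⊗[R] M) :
    ∃ m : M, z = ⟨a, Ideal.mem_span_singleton_self a⟩ ⊗ₜ m := by
  induction z using TensorProduct.induction_on with
  | zero => exact ⟨0, (tmul_zero _ _).symm⟩
  | tmul x m =>
    obtain ⟨c, hc⟩ := Ideal.mem_span_singleton'.mp x.2
    exact ⟨c • m, by rw [← smul_tmul]; congr; exact Subtype.ext hc.symm⟩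
  | add x y hx hy =>
    obtain ⟨mx, rfl⟩ := hx
    obtain ⟨my, rfl⟩ := hy
    exact ⟨mx + my, (tmul_add _ _ _).symm⟩

theorem Ideal.rTensor_span_singleton_subtype_injective {R M : Type*} [CommRing R]
    [AddCommGroup M] [Module R M] {a : R}
    (h : ∀ m : M, a • m = 0 → m ∈ (Ideal.span {a}).annihilator • (⊤ : Submodule R M)) :
    Function.Injective ((Ideal.span {a}).subtype.rTensor M) := by
  set g : Ideal.span {a} := ⟨a, Ideal.mem_span_singleton_self a⟩
  have hker : (Ideal.span {a}).annihilator • (⊤ : Submodule R M) ≤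
      LinearMap.ker (TensorProduct.mk R _ M g) := by
    refine Submodule.smul_le.mpr fun r hr n _ => ?_
    have hrg : r • g = 0 := Subtype.ext ((Submodule.mem_annihilator_span_singleton _ _).mp hr)
    rw [LinearMap.mem_ker, mk_apply, ← smul_tmul, hrg, zero_tmul]
  rw [injective_iff_map_eq_zero]
  intro z hz
  obtain ⟨m, rfl⟩ := Ideal.exists_eq_tmul_of_span_singleton a z
  exact hker (h m (by simpa using congrArg (TensorProduct.lid R M) hz))

theorem DualNumber.flat_of_ker_eps_le {K M : Type*} [Field K] [AddCommGroup M] [Module K[ε] M]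
    (h : ∀ m : M, (ε : K[ε]) • m = 0 → ∃ n : M, m = (ε : K[ε]) • n) : Module.Flat K[ε] M := by
  rw [Module.Flat.iff_rTensor_injective']
  intro I
  obtain ⟨a, rfl, ha⟩ : ∃ a : K[ε], I = Ideal.span {a} ∧
      ∀ m : M, a • m = 0 → m ∈ (Ideal.span {a}).annihilator • (⊤ : Submodule K[ε] M) := by
    rcases ideal_trichotomy I with rfl | rfl | rfl
    · refine ⟨0, Ideal.span_singleton_zero.symm, fun m _ => ?_⟩
      rw [Ideal.span_singleton_zero, Submodule.annihilator_bot, Submodule.top_smul]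
      trivial
    · refine ⟨ε, rfl, fun m hm => ?_⟩
      obtain ⟨n, rfl⟩ := h m hm
      exact Submodule.smul_mem_smul
        ((Submodule.mem_annihilator_span_singleton _ _).mpr eps_mul_eps) trivial
    · refine ⟨1, Ideal.span_singleton_one.symm, fun m hm => ?_⟩
      rw [one_smul] at hm
      exact hm ▸ zero_mem _
  exact Ideal.rTensor_span_singleton_subtype_injective ha

section SquareZeroElement

variable {B : Type*} [CommRing B] {e : B}

abbrev DualNumber.liftOfSqZero (k : Type*) [CommRing k] [Algebra k B] (e : B) (he : e * e = 0) :
    k[ε] →ₐ[k] B :=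
  DualNumber.lift ⟨(Algebra.ofId k B, e), he, fun _ => Commute.all _ _⟩

theorem DualNumber.liftOfSqZero_mul {k : Type*} [CommRing k] [Algebra k B] (he : e * e = 0)
    (c : k[ε]) (u : B) :
    liftOfSqZero k e he c * u = c.fst • u + c.snd • (e * u) := by
  rw [Algebra.smul_def, Algebra.smul_def, lift_apply_apply, add_mul, mul_assoc]
  rfl

theorem DualNumber.flat_liftOfSqZero {k : Type*} [Field k] [Algebra k B] (he : e * e = 0)
    (hann : {b : B | e * b = 0} = {x : B | ∃ b : B, x = e * b}) :
    @Module.Flat k[ε] B _ _ (Module.compHom B (liftOfSqZero k e he).toRingHom) := by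
  let := Module.compHom B (liftOfSqZero k e he).toRingHom
  have hsmul : ∀ m : B, (ε : k[ε]) • m = e * m := fun m =>
    congrArg (· * m) (lift_apply_eps _)
  refine DualNumber.flat_of_ker_eps_le fun m hm => ?_
  rw [hsmul] at hm
  obtain ⟨n, rfl⟩ : m ∈ {x : B | ∃ b : B, x = e * b} := hann ▸ hm
  exact ⟨n, (hsmul n).symm⟩

theorem DualNumber.bracket_liftOfSqZero_mul_left {k : Type*} [CommRing k] [Algebra k B]
    {P : B → B → B} (hPaddl : ∀ a b c : B, P (a + b) c = P a c + P b c)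
    (hPsmull : ∀ (r : k) (a b : B), P (r • a) b = r • P a b) (he : e * e = 0)
    (heP : ∀ u v : B, P (e * u) v = e * P u v) (c : k[ε]) (u v : B) :
    P (liftOfSqZero k e he c * u) v = liftOfSqZero k e he c * P u v := by
  rw [liftOfSqZero_mul, hPaddl, hPsmull, hPsmull, heP, ← liftOfSqZero_mul]

end SquareZeroElement

section Extension

variable {B B₀ G : Type*} [CommRing B] [CommRing B₀] [FunLike G B₀ B]
  {φ : B → B₀} {j : G}

theorem apply_map_eq_mul_apply_one (hjmod : ∀ (b : B) (x : B₀), j (φ b * x) = b * j x) (b : B) :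
    j (φ b) = b * j 1 := by
  simpa using hjmod b 1

theorem apply_one_mul_self_eq_zero [ZeroHomClass G B₀ B]
    (hjrange : Set.range j = {x : B | φ x = 0})
    (hjmod : ∀ (b : B) (x : B₀), j (φ b * x) = b * j x) : j 1 * j 1 = 0 := by
  have hφe : φ (j 1) = 0 := hjrange.subset ⟨1, rfl⟩
  rw [← apply_map_eq_mul_apply_one hjmod, hφe, map_zero]

theorem ker_eq_apply_one_mul (hφsurj : Function.Surjective φ)
    (hjrange : Set.range j = {x : B | φ x = 0})
    (hjmod : ∀ (b : B) (x : B₀), j (φ b * x) = b * j x) :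
    {x : B | φ x = 0} = {x : B | ∃ b : B, x = j 1 * b} := by
  rw [← hjrange]
  ext x
  constructor
  · rintro ⟨y, rfl⟩
    obtain ⟨b, rfl⟩ := hφsurj y
    exact ⟨b, by rw [apply_map_eq_mul_apply_one hjmod, mul_comm]⟩
  · rintro ⟨b, rfl⟩
    exact ⟨φ b, by rw [apply_map_eq_mul_apply_one hjmod, mul_comm]⟩

theorem annihilator_apply_one_eq_apply_one_mul [ZeroHomClass G B₀ B]
    (hjinj : Function.Injective j) (hφsurj : Function.Surjective φ)
    (hjrange : Set.range j = {x : B | φ x = 0})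
    (hjmod : ∀ (b : B) (x : B₀), j (φ b * x) = b * j x) :
    {b : B | j 1 * b = 0} = {x : B | ∃ b : B, x = j 1 * b} := by
  rw [← ker_eq_apply_one_mul hφsurj hjrange hjmod]
  ext b
  rw [Set.mem_ofPred_eq, Set.mem_ofPred_eq, mul_comm, ← apply_map_eq_mul_apply_one hjmod,
    map_eq_zero_iff j hjinj]

end Extension

section Bracket

variable {A : Type*} [CommRing A] {P : A → A → A}

theorem bracket_one_of_leibniz (hleib : ∀ a b c : A, P a (b * c) = b * P a c + c * P a b)
    (a : A) : P a 1 = 0 := by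
  simpa using hleib a 1 1

theorem bracket_mul_left_of_bracket_eq_zero (hanti : ∀ a b : A, P a b = -P b a)
    (hleib : ∀ a b c : A, P a (b * c) = b * P a c + c * P a b) {e : A}
    (he : ∀ b : A, P b e = 0) (u v : A) : P (e * u) v = e * P u v := by
  rw [hanti, hleib, he, mul_zero, add_zero, hanti u v, mul_neg]

theorem bracket_mul_right_of_mul_left (hanti : ∀ a b : A, P a b = -P b a) {x : A}
    (hx : ∀ u v : A, P (x * u) v = x * P u v) (u v : A) : P u (x * v) = x * P u v := by
  rw [hanti, hx, hanti v u, mul_neg, neg_neg]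

end Bracket

theorem stmt3_general (k B B₀ : Type*) [Field k] [CommRing B] [Algebra k B]
    [CommRing B₀] [Algebra k B₀]
    (P : B → B → B) (P₀ : B₀ → B₀ → B₀)
    -- `(B, P)` is a Poisson `k`-algebra
    (hPaddl : ∀ a b c : B, P (a + b) c = P a c + P b c)
    (hPsmull : ∀ (r : k) (a b : B), P (r • a) b = r • P a b)
    (hPanti : ∀ a b : B, P a b = -P b a)
    (hPleib : ∀ a b c : B, P a (b * c) = b * P a c + c * P a b)
    -- `(B₀, P₀)` is a Poisson `k`-algebra
    (hP₀leib : ∀ a b c : B₀, P₀ a (b * c) = b * P₀ a c + c * P₀ a b)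
    -- the surjective Poisson homomorphism `φ`
    (φ : B →ₐ[k] B₀) (hφsurj : Function.Surjective φ)
    -- the embedding `j` of the kernel
    (j : B₀ →ₗ[k] B) (hjinj : Function.Injective j)
    (hjrange : Set.range j = {x : B | φ x = 0})
    (hjmod : ∀ (b : B) (x : B₀), j (φ b * x) = b * j x)
    (hjbr : ∀ (b : B) (x : B₀), j (P₀ (φ b) x) = P b (j x)) :
    (j 1 * j 1 = 0) ∧
    (∀ b : B, P b (j 1) = 0) ∧
    ({x : B | φ x = 0} = {x : B | ∃ b : B, x = j 1 * b}) ∧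
    ({b : B | j 1 * b = 0} = {x : B | ∃ b : B, x = j 1 * b}) ∧
    (∃ ρ : DualNumber k →+* B,
      ρ DualNumber.eps = j 1 ∧
      (∀ c : k, ρ (algebraMap k (DualNumber k) c) = algebraMap k B c) ∧
      (∀ (c : DualNumber k) (u v : B), P (ρ c * u) v = ρ c * P u v) ∧
      (∀ (c : DualNumber k) (u v : B), P u (ρ c * v) = ρ c * P u v) ∧
      @Module.Flat (DualNumber k) B _ _ (Module.compHom B ρ)) := by
  have he := apply_one_mul_self_eq_zero hjrange hjmod
  have hann := annihilator_apply_one_eq_apply_one_mul hjinj hφsurj hjrange hjmod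
  have hPe : ∀ b : B, P b (j 1) = 0 := fun b => by
    rw [← hjbr, bracket_one_of_leibniz hP₀leib, map_zero]
  have hρl := bracket_liftOfSqZero_mul_left hPaddl hPsmull he
    (bracket_mul_left_of_bracket_eq_zero hPanti hPleib hPe)
  refine ⟨he, hPe, ker_eq_apply_one_mul hφsurj hjrange hjmod, hann,
    (liftOfSqZero k (j 1) he).toRingHom, lift_apply_eps _, (liftOfSqZero k (j 1) he).commutes,
    hρl, fun c => bracket_mul_right_of_mul_left hPanti (hρl c), flat_liftOfSqZero he hann⟩

/-- A short Poisson extension `0 → B₀ →ʲ B →^φ B₀ → 0` of a Poisson algebra `B₀` over `k` by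
itself, with `e := j(1)`, satisfies: `e² = 0`, `{b, e} = 0` for all `b`, `ker φ = e·B`, and
the annihilator of `e` equals `e·B`.  Consequently the ring homomorphism `k[ε] → B` sending
`ε` to `e` makes `B` a `k[ε]`-algebra which is flat over `k[ε]` and whose bracket is
`k[ε]`-bilinear. -/
theorem stmt3 (k B B₀ : Type*) [Field k] [CommRing B] [Algebra k B]
    [CommRing B₀] [Algebra k B₀]
    (P : B → B → B) (P₀ : B₀ → B₀ → B₀)
    -- `(B, P)` is a Poisson `k`-algebra
    (hPaddl : ∀ a b c : B, P (a + b) c = P a c + P b c)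
    (hPaddr : ∀ a b c : B, P a (b + c) = P a b + P a c)
    (hPsmull : ∀ (r : k) (a b : B), P (r • a) b = r • P a b)
    (hPsmulr : ∀ (r : k) (a b : B), P a (r • b) = r • P a b)
    (hPanti : ∀ a b : B, P a b = -P b a)
    (hPjac : ∀ a b c : B, P a (P b c) = P (P a b) c + P b (P a c))
    (hPleib : ∀ a b c : B, P a (b * c) = b * P a c + c * P a b)
    -- `(B₀, P₀)` is a Poisson `k`-algebra
    (hP₀addl : ∀ a b c : B₀, P₀ (a + b) c = P₀ a c + P₀ b c)
    (hP₀addr : ∀ a b c : B₀, P₀ a (b + c) = P₀ a b + P₀ a c)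
    (hP₀smull : ∀ (r : k) (a b : B₀), P₀ (r • a) b = r • P₀ a b)
    (hP₀smulr : ∀ (r : k) (a b : B₀), P₀ a (r • b) = r • P₀ a b)
    (hP₀anti : ∀ a b : B₀, P₀ a b = -P₀ b a)
    (hP₀jac : ∀ a b c : B₀, P₀ a (P₀ b c) = P₀ (P₀ a b) c + P₀ b (P₀ a c))
    (hP₀leib : ∀ a b c : B₀, P₀ a (b * c) = b * P₀ a c + c * P₀ a b)
    -- the surjective Poisson homomorphism `φ`
    (φ : B →ₐ[k] B₀) (hφsurj : Function.Surjective φ)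
    (hφP : ∀ u v : B, φ (P u v) = P₀ (φ u) (φ v))
    -- the embedding `j` of the kernel
    (j : B₀ →ₗ[k] B) (hjinj : Function.Injective j)
    (hjrange : Set.range j = {x : B | φ x = 0})
    (hjmod : ∀ (b : B) (x : B₀), j (φ b * x) = b * j x)
    (hjbr : ∀ (b : B) (x : B₀), j (P₀ (φ b) x) = P b (j x)) :
    (j 1 * j 1 = 0) ∧
    (∀ b : B, P b (j 1) = 0) ∧
    ({x : B | φ x = 0} = {x : B | ∃ b : B, x = j 1 * b}) ∧
    ({b : B | j 1 * b = 0} = {x : B | ∃ b : B, x = j 1 * b}) ∧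
    (∃ ρ : DualNumber k →+* B,
      ρ DualNumber.eps = j 1 ∧
      (∀ c : k, ρ (algebraMap k (DualNumber k) c) = algebraMap k B c) ∧
      (∀ (c : DualNumber k) (u v : B), P (ρ c * u) v = ρ c * P u v) ∧
      (∀ (c : DualNumber k) (u v : B), P u (ρ c * v) = ρ c * P u v) ∧
      @Module.Flat (DualNumber k) B _ _ (Module.compHom B ρ)) :=
  stmt3_general k B B₀ P P₀ hPaddl hPsmull hPanti hPleib hP₀leib φ hφsurj j hjinj hjrange hjmod hjbr
end

section
/- Let k be a field, (A, {-,-}) a Poisson k-algebra, and S ⊆ A a multiplicative submonoid. Then there exists a unique k-bilinear bracket {-,-}_S on the localization S⁻¹A which is a biderivation (i.e. {u, vw}_S = v·{u,w}_S + w·{u,v}_S and {uv, w}_S = u·{v,w}_S + v·{u,w}_S for all u, v, w) and satisfies {a/1, b/1}_S = {a,b}/1 for all a, b ∈ A. This bracket is antisymmetric and satisfies the Jacobi identity, so (S⁻¹A, {-,-}_S) is a Poisson k-algebra and the canonical map A → S⁻¹A is a Poisson k-algebra homomorphism; on fractions it is given by {a₁/s₁, a₂/s₂}_S = {a₁,a₂}/(s₁s₂)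 − (a₂·{a₁,s₂})/(s₁s₂²) − (a₁·{s₁,a₂})/(s₁²s₂) + (a₁a₂·{s₁,s₂})/(s₁²s₂²). -/
/-!
A derivation `d : A → S⁻¹A` is the same thing as the algebra map `a ↦ a + d(a) ε` into the dual
numbers over `S⁻¹A`. Elements of `S` are sent to units, so this map extends to `S⁻¹A`, and the
`ε`-part of the extension is a derivation of `S⁻¹A` extending `d`; by the quotient rule it is the
only one. Extending `{a, -}` in the second slot and then the result in the first slot produces a
biderivation of `S⁻¹A` extending `{-, -}`. A biderivation of `S⁻¹A` is determined by its values
on `A`: this gives uniqueness, the formula on fractions, and antisymmetry (compare with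
`(u, v) ↦ -{v, u}`). For an antisymmetric biderivation the Jacobiator is a derivation in each
slot, so it vanishes because it vanishes on `A`.
-/

/-- The defining properties of the localized Poisson bracket: `k`-bilinearity (with the
`k`-action expressed through the structure maps), the biderivation property in each slot,
and compatibility with the canonical map `A → S⁻¹A`. -/
def LocBracketProps (k : Type*) {A : Type*} [Field k] [CommRing A] [Algebra k A]
    (P : A → A → A) (S : Submonoid A)
    (Q : Localization S → Localization S → Localization S) : Prop :=
  (∀ u v w : Localization S, Q (u + v) w = Q u w + Q v w) ∧
  (∀ u v w : Localization S, Q u (v + w) = Q u v + Q u w) ∧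
  (∀ (c : k) (u v : Localization S),
    Q (algebraMap A (Localization S) (algebraMap k A c) * u) v =
      algebraMap A (Localization S) (algebraMap k A c) * Q u v) ∧
  (∀ (c : k) (u v : Localization S),
    Q u (algebraMap A (Localization S) (algebraMap k A c) * v) =
      algebraMap A (Localization S) (algebraMap k A c) * Q u v) ∧
  (∀ u v w : Localization S, Q u (v * w) = v * Q u w + w * Q u v) ∧
  (∀ u v w : Localization S, Q (u * v) w = u * Q v w + v * Q u w) ∧
  (∀ a b : A, Q (algebraMap A (Localization S) a) (algebraMap A (Localization S) b) =
    algebraMap A (Localization S) (P a b))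

namespace Localization

variable {A : Type*} [CommRing A] {S : Submonoid A}

theorem mk_mul_algebraMap_self (a : A) (s : S) :
    mk a s * algebraMap A (Localization S) s = algebraMap A (Localization S) a := by
  rw [mk_eq_mk'_apply]
  exact IsLocalization.mk'_spec _ a s

theorem mk_eq_algebraMap_mul_mk_one (a : A) (s : S) :
    mk a s = algebraMap A (Localization S) a * mk 1 s := by
  rw [← mk_one_eq_algebraMap, mk_mul, mul_one, one_mul]

theorem apply_mk_of_leibniz (f : Localization S → Localization S)
    (hf : ∀ x y, f (x * y) = x * f y + y * f x) (a : A) (s : S) :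
    f (mk a s) = mk 1 s * f (algebraMap A _ a) - mk a (s * s) * f (algebraMap A _ s) := by
  have hquot := hf (mk a s) (algebraMap A _ s)
  rw [mk_mul_algebraMap_self] at hquot
  have hinv := mk_mul_algebraMap_self (1 : A) s
  rw [map_one] at hinv
  have hsq : mk a (s * s) = mk 1 s * mk a s := by rw [mk_mul, one_mul]
  rw [hsq]
  linear_combination (-mk 1 s) * hquot - f (mk a s) * hinv

theorem funext_of_leibniz {f g : Localization S → Localization S}
    (hf : ∀ x y, f (x * y) = x * f y + y * f x) (hg : ∀ x y, g (x * y) = x * g y + y * g x)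
    (h : ∀ a, f (algebraMap A _ a) = g (algebraMap A _ a)) : f = g := by
  funext x
  induction x using Localization.ind with
  | H p => rw [apply_mk_of_leibniz f hf, apply_mk_of_leibniz g hg, h, h]

section Biderivation

variable {Q Q' : Localization S → Localization S → Localization S}
  (hQl : ∀ u v w, Q (u * v) w = u * Q v w + v * Q u w)
  (hQr : ∀ u v w, Q u (v * w) = v * Q u w + w * Q u v)
include hQl hQr

theorem funext₂_of_leibniz (hQ'l : ∀ u v w, Q' (u * v) w = u * Q' v w + v * Q' u w)
    (hQ'r : ∀ u v w, Q' u (v * w) = v * Q' u w + w * Q' u v)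
    (h : ∀ a b,
      Q (algebraMap A _ a) (algebraMap A _ b) = Q' (algebraMap A _ a) (algebraMap A _ b)) :
    Q = Q' := by
  have halg (a : A) : Q (algebraMap A _ a) = Q' (algebraMap A _ a) :=
    funext_of_leibniz (hQr _) (hQ'r _) (h a)
  funext u v
  exact congrFun (funext_of_leibniz (f := (Q · v)) (g := (Q' · v)) (hQl · · v) (hQ'l · · v)
    fun a => congrFun (halg a) v) u

theorem antisymm_of_leibniz
    (h : ∀ a b,
      Q (algebraMap A _ a) (algebraMap A _ b) = -Q (algebraMap A _ b) (algebraMap A _ a))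
    (u v : Localization S) : Q u v = -Q v u :=
  congrFun₂ (funext₂_of_leibniz (Q' := fun u v => -Q v u) hQl hQr
    (fun u v w => by rw [hQr]; ring) (fun u v w => by rw [hQl]; ring) h) u v

theorem apply_mk_mk_of_leibniz (P : A → A → A)
    (hP : ∀ a b, Q (algebraMap A _ a) (algebraMap A _ b) = algebraMap A _ (P a b))
    (a₁ a₂ : A) (s₁ s₂ : S) :
    Q (mk a₁ s₁) (mk a₂ s₂) =
      mk (P a₁ a₂) (s₁ * s₂) - mk (a₂ * P a₁ s₂) (s₁ * (s₂ * s₂)) -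
        mk (a₁ * P s₁ a₂) (s₁ * s₁ * s₂) + mk (a₁ * a₂ * P s₁ s₂) (s₁ * s₁ * (s₂ * s₂)) := by
  rw [apply_mk_of_leibniz (Q · (mk a₂ s₂)) (hQl · · _),
    apply_mk_of_leibniz (Q _) (hQr _), apply_mk_of_leibniz (Q _) (hQr _)]
  have hsplit (x : A) (s t : S) : mk x (s * t) = algebraMap A _ x * mk 1 s * mk 1 t := by
    rw [mul_assoc, mk_mul, one_mul, mk_eq_algebraMap_mul_mk_one]
  simp only [hP, hsplit, map_mul, map_one]
  ring

end Biderivation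

end Localization

namespace Derivation

open TrivSqZeroExt

variable {R A : Type*} [CommRing R] [CommRing A] [Algebra R A] {S : Submonoid A}
variable (d : Derivation R A (Localization S))

def toDualNumbers : A →ₐ[R] DualNumber (Localization S) where
  toFun a := inl (algebraMap A _ a) + inr (d a)
  map_one' := by ext <;> simp
  map_mul' a b := by
    ext
    · simp only [fst_add, fst_inl, fst_inr, fst_mul, map_mul, add_zero]
    · simp only [snd_add, snd_inl, snd_inr, snd_mul, fst_add, fst_inl, fst_inr, add_zero,
        zero_add, leibniz, smul_eq_mul, op_smul_eq_mul, Algebra.smul_def]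
      ring
  map_zero' := by ext <;> simp
  map_add' a b := by ext <;> simp
  commutes' c := by
    ext
    · simp [algebraMap_eq_inl', IsScalarTower.algebraMap_apply R A (Localization S)]
    · simp [algebraMap_eq_inl']

theorem isUnit_toDualNumbers (s : S) : IsUnit (d.toDualNumbers s) := by
  rw [isUnit_iff_isUnit_fst]
  simpa [toDualNumbers] using IsLocalization.map_units (Localization S) s

noncomputable def liftDualNumbers : Localization S →ₐ[R] DualNumber (Localization S) :=
  IsLocalization.liftAlgHom d.isUnit_toDualNumbers

theorem fst_liftDualNumbers (x : Localization S) : (d.liftDualNumbers x).fst = x := by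
  have hfst : ((fstHom R (Localization S) (Localization S)).comp d.liftDualNumbers).toRingHom =
      RingHom.id _ := by
    apply IsLocalization.ringHom_ext S
    ext a
    simp [liftDualNumbers, toDualNumbers]
  exact congr($hfst x)

noncomputable def extendLocalization : Derivation R (Localization S) (Localization S) :=
  Derivation.mk' ((sndHom (Localization S) (Localization S)).restrictScalars R ∘ₗ
      d.liftDualNumbers.toLinearMap)
    (fun x y => by
      simp only [LinearMap.coe_comp, LinearMap.coe_restrictScalars, AlgHom.coe_toLinearMap,
        Function.comp_apply, sndHom_apply, map_mul, snd_mul, fst_liftDualNumbers, smul_eq_mul,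
        op_smul_eq_mul]
      ring)

theorem extendLocalization_algebraMap (a : A) : d.extendLocalization (algebraMap A _ a) = d a := by
  simp [extendLocalization, liftDualNumbers, toDualNumbers]

theorem localization_ext {D₁ D₂ : Derivation R (Localization S) (Localization S)}
    (h : ∀ a, D₁ (algebraMap A _ a) = D₂ (algebraMap A _ a)) : D₁ = D₂ :=
  DFunLike.coe_injective <| Localization.funext_of_leibniz
    (fun x y => by simp only [leibniz, smul_eq_mul])
    (fun x y => by simp only [leibniz, smul_eq_mul]) h

end Derivation

structure IsBiderivation (k : Type*) {B : Type*} [CommRing k] [CommRing B] [Algebra k B]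
    (P : B → B → B) : Prop where
  add_left : ∀ a b c, P (a + b) c = P a c + P b c
  add_right : ∀ a b c, P a (b + c) = P a b + P a c
  smul_left : ∀ (r : k) a b, P (r • a) b = r • P a b
  smul_right : ∀ (r : k) a b, P a (r • b) = r • P a b
  mul_left : ∀ a b c, P (a * b) c = a * P b c + b * P a c
  mul_right : ∀ a b c, P a (b * c) = b * P a c + c * P a b

def jacobiator {B : Type*} [Add B] (Q : B → B → B) (u v w : B) : B :=
  Q u (Q v w) + Q v (Q w u) + Q w (Q u v)

theorem jacobiator_rotate {B : Type*} [AddCommSemigroup B] (Q : B → B → B) (u v w : B) :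
    jacobiator Q u v w = jacobiator Q v w u := by
  simp only [jacobiator, add_comm, add_left_comm]

namespace IsBiderivation

section General

variable {k B : Type*} [CommRing k] [CommRing B] [Algebra k B] {Q : B → B → B}
  (hQ : IsBiderivation k Q)
include hQ

theorem neg_right (u v : B) : Q u (-v) = -Q u v := by
  simpa using hQ.smul_right (-1) u v

theorem one_right (u : B) : Q u 1 = 0 := by
  simpa using hQ.mul_right u 1 1

theorem one_left (v : B) : Q 1 v = 0 := by
  simpa using hQ.mul_left 1 1 v

theorem jacobi_iff_jacobiator_eq_zero (hanti : ∀ u v, Q u v = -Q v u) (u v w : B) :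
    Q u (Q v w) = Q (Q u v) w + Q v (Q u w) ↔ jacobiator Q u v w = 0 := by
  rw [hanti (Q u v) w, hanti u w, hQ.neg_right, jacobiator]
  constructor <;> intro h <;> linear_combination h

theorem jacobiator_mul_left (hanti : ∀ u v, Q u v = -Q v u) (u u' v w : B) :
    jacobiator Q (u * u') v w = u * jacobiator Q u' v w + u' * jacobiator Q u v w := by
  simp only [jacobiator, hQ.mul_left, hQ.mul_right, hQ.add_right]
  linear_combination (Q w u') * hanti v u + (Q w u) * hanti v u'

end General

section Localization

variable {k A : Type*} [CommRing k] [CommRing A] [Algebra k A] {P : A → A → A}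
  (hP : IsBiderivation k P) (S : Submonoid A)

def derivationRight (a : A) : Derivation k A A where
  toFun := P a
  map_add' := hP.add_right a
  map_smul' r := hP.smul_right r a
  map_one_eq_zero' := hP.one_right a
  leibniz' := hP.mul_right a

noncomputable def localizedRight (a : A) : Derivation k (Localization S) (Localization S) :=
  ((Algebra.linearMap A (Localization S)).compDer (hP.derivationRight a)).extendLocalization

theorem localizedRight_algebraMap (a b : A) :
    hP.localizedRight S a (algebraMap A _ b) = algebraMap A _ (P a b) := by
  simp [localizedRight, Derivation.extendLocalization_algebraMap, derivationRight]

theorem localizedRight_add (a b : A) :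
    hP.localizedRight S (a + b) = hP.localizedRight S a + hP.localizedRight S b :=
  Derivation.localization_ext fun c => by simp [localizedRight_algebraMap, hP.add_left]

theorem localizedRight_smul (r : k) (a : A) :
    hP.localizedRight S (r • a) = r • hP.localizedRight S a :=
  Derivation.localization_ext fun c => by
    simp [localizedRight_algebraMap, hP.smul_left, algebraMap.coe_smul]

theorem localizedRight_one : hP.localizedRight S 1 = 0 :=
  Derivation.localization_ext fun c => by simp [localizedRight_algebraMap, hP.one_left]

theorem localizedRight_mul (a b : A) :
    hP.localizedRight S (a * b) = a • hP.localizedRight S b + b • hP.localizedRight S a :=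
  Derivation.localization_ext fun c => by
    simp [localizedRight_algebraMap, hP.mul_left, Algebra.smul_def]

noncomputable def localizedLeft (v : Localization S) : Derivation k A (Localization S) where
  toFun a := hP.localizedRight S a v
  map_add' a b := by simp only [localizedRight_add, Derivation.add_apply]
  map_smul' r a := by
    simp only [localizedRight_smul, Derivation.smul_apply, RingHom.id_apply]
  map_one_eq_zero' := by
    show hP.localizedRight S 1 v = 0
    rw [localizedRight_one, Derivation.zero_apply]
  leibniz' a b := by
    show hP.localizedRight S (a * b) v = a • hP.localizedRight S b v + b • hP.localizedRight S a v
    rw [localizedRight_mul, Derivation.add_apply, Derivation.smul_apply, Derivation.smul_apply]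

noncomputable def localizedBracket (u v : Localization S) : Localization S :=
  (hP.localizedLeft S v).extendLocalization u

theorem localizedBracket_algebraMap_left (a : A) (v : Localization S) :
    hP.localizedBracket S (algebraMap A _ a) v = hP.localizedRight S a v :=
  Derivation.extendLocalization_algebraMap _ a

theorem localizedBracket_algebraMap (a b : A) :
    hP.localizedBracket S (algebraMap A _ a) (algebraMap A _ b) = algebraMap A _ (P a b) := by
  rw [localizedBracket_algebraMap_left, localizedRight_algebraMap]

theorem localizedBracket_mul_left (u u' v : Localization S) :
    hP.localizedBracket S (u * u') v =
      u * hP.localizedBracket S u' v + u' * hP.localizedBracket S u v :=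
  Derivation.leibniz _ u u'

theorem isBiderivation_localizedBracket : IsBiderivation k (hP.localizedBracket S) where
  add_left u u' v := map_add _ u u'
  smul_left r u v := Derivation.map_smul _ r u
  mul_left := hP.localizedBracket_mul_left S
  add_right u v w := congrFun (Localization.funext_of_leibniz
    (f := (hP.localizedBracket S · (v + w)))
    (g := fun x => hP.localizedBracket S x v + hP.localizedBracket S x w)
    (hP.localizedBracket_mul_left S · · _)
    (fun x y => by simp only [localizedBracket_mul_left]; ring)
    (fun a => by simp only [localizedBracket_algebraMap_left, map_add])) u
  smul_right r u v := congrFun (Localization.funext_of_leibniz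
    (f := (hP.localizedBracket S · (r • v))) (g := fun x => r • hP.localizedBracket S x v)
    (hP.localizedBracket_mul_left S · · _)
    (fun x y => by simp only [localizedBracket_mul_left, smul_add, mul_smul_comm])
    (fun a => by simp only [localizedBracket_algebraMap_left, Derivation.map_smul])) u
  mul_right u v w := congrFun (Localization.funext_of_leibniz
    (f := (hP.localizedBracket S · (v * w)))
    (g := fun x => v * hP.localizedBracket S x w + w * hP.localizedBracket S x v)
    (hP.localizedBracket_mul_left S · · _)
    (fun x y => by simp only [localizedBracket_mul_left]; ring)
    (fun a => by simp only [localizedBracket_algebraMap_left, Derivation.leibniz, smul_eq_mul])) u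

end Localization

theorem jacobiator_eq_zero_of_algebraMap {k A : Type*} [CommRing k] [CommRing A]
    [Algebra k A] {S : Submonoid A} {Q : Localization S → Localization S → Localization S}
    (hQ : IsBiderivation k Q) (hanti : ∀ u v, Q u v = -Q v u)
    (h : ∀ a b c : A, jacobiator Q (algebraMap A _ a) (algebraMap A _ b) (algebraMap A _ c) = 0)
    (u v w : Localization S) : jacobiator Q u v w = 0 := by
  have extend (v w : Localization S) (hvw : ∀ a, jacobiator Q (algebraMap A _ a) v w = 0)
      (u : Localization S) : jacobiator Q u v w = 0 :=
    congrFun (Localization.funext_of_leibniz (f := (jacobiator Q · v w)) (g := fun _ => 0)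
      (hQ.jacobiator_mul_left hanti · · v w) (fun _ _ => by ring) hvw) u
  have hmiddle (c : A) (u v : Localization S) : jacobiator Q v (algebraMap A _ c) u = 0 :=
    extend _ u (fun b => by
      rw [jacobiator_rotate, jacobiator_rotate]
      exact extend _ _ (fun a => h a b c) u) v
  exact extend v w (fun a => by rw [jacobiator_rotate, jacobiator_rotate]; exact hmiddle a v w) u

end IsBiderivation

theorem locBracketProps_iff {k A : Type*} [Field k] [CommRing A] [Algebra k A] (P : A → A → A)
    (S : Submonoid A) (Q : Localization S → Localization S → Localization S) :
    LocBracketProps k P S Q ↔ IsBiderivation k Q ∧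
      ∀ a b, Q (algebraMap A _ a) (algebraMap A _ b) = algebraMap A _ (P a b) := by
  have hsmul (c : k) (u : Localization S) :
      algebraMap A (Localization S) (algebraMap k A c) * u = c • u := by
    rw [← IsScalarTower.algebraMap_apply, Algebra.smul_def]
  simp only [LocBracketProps, hsmul]
  constructor
  · rintro ⟨h₁, h₂, h₃, h₄, h₅, h₆, h₇⟩
    exact ⟨⟨h₁, h₂, h₃, h₄, h₆, h₅⟩, h₇⟩
  · rintro ⟨⟨h₁, h₂, h₃, h₄, h₆, h₅⟩, h₇⟩
    exact ⟨h₁, h₂, h₃, h₄, h₅, h₆, h₇⟩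

/-- A Poisson bracket on a `k`-algebra `A` extends uniquely to a `k`-bilinear biderivation on
any localization `S⁻¹A`, which is again a Poisson bracket (antisymmetric, Jacobi), for which
the canonical map is a Poisson homomorphism, and which is given on fractions by the displayed
formula. -/
theorem stmt9 (k A : Type*) [Field k] [CommRing A] [Algebra k A]
    (P : A → A → A)
    -- `(A, P)` is a Poisson `k`-algebra
    (hPaddl : ∀ a b c : A, P (a + b) c = P a c + P b c)
    (hPaddr : ∀ a b c : A, P a (b + c) = P a b + P a c)
    (hPsmull : ∀ (r : k) (a b : A), P (r • a) b = r • P a b)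
    (hPsmulr : ∀ (r : k) (a b : A), P a (r • b) = r • P a b)
    (hPanti : ∀ a b : A, P a b = -P b a)
    (hPjac : ∀ a b c : A, P a (P b c) = P (P a b) c + P b (P a c))
    (hPleib : ∀ a b c : A, P a (b * c) = b * P a c + c * P a b)
    (S : Submonoid A) :
    ∃ Q : Localization S → Localization S → Localization S,
      LocBracketProps k P S Q ∧
      (∀ Q' : Localization S → Localization S → Localization S,
        LocBracketProps k P S Q' → Q' = Q) ∧
      (∀ u v : Localization S, Q u v = -Q v u) ∧
      (∀ u v w : Localization S, Q u (Q v w) = Q (Q u v) w + Q v (Q u w)) ∧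
      (∀ (a₁ a₂ : A) (s₁ s₂ : S),
        Q (Localization.mk a₁ s₁) (Localization.mk a₂ s₂) =
          Localization.mk (P a₁ a₂) (s₁ * s₂) -
            Localization.mk (a₂ * P a₁ (s₂ : A)) (s₁ * (s₂ * s₂)) -
            Localization.mk (a₁ * P (s₁ : A) a₂) (s₁ * s₁ * s₂) +
            Localization.mk (a₁ * a₂ * P (s₁ : A) (s₂ : A)) (s₁ * s₁ * (s₂ * s₂))) := by
  have hPleib_left (a b c : A) : P (a * b) c = a * P b c + b * P a c := by
    linear_combination hPanti (a * b) c - hPleib c a b - a * hPanti b c - b * hPanti a c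
  have hP : IsBiderivation k P := ⟨hPaddl, hPaddr, hPsmull, hPsmulr, hPleib_left, hPleib⟩
  have hQ := hP.isBiderivation_localizedBracket S
  have hQP := hP.localizedBracket_algebraMap S
  have hanti := Localization.antisymm_of_leibniz hQ.mul_left hQ.mul_right
    fun a b => by rw [hQP, hQP, hPanti, map_neg]
  refine ⟨hP.localizedBracket S, (locBracketProps_iff P S _).2 ⟨hQ, hQP⟩, fun Q' hQ' => ?_,
    hanti, fun u v w => ?_, Localization.apply_mk_mk_of_leibniz hQ.mul_left hQ.mul_right P hQP⟩
  · obtain ⟨hQ', hQ'P⟩ := (locBracketProps_iff P S Q').1 hQ'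
    exact Localization.funext₂_of_leibniz hQ'.mul_left hQ'.mul_right hQ.mul_left hQ.mul_right
      fun a b => by rw [hQ'P, hQP]
  · rw [hQ.jacobi_iff_jacobiator_eq_zero hanti]
    refine hQ.jacobiator_eq_zero_of_algebraMap hanti (fun a b c => ?_) u v w
    have hPjacobiator := (hP.jacobi_iff_jacobiator_eq_zero hPanti a b c).1 (hPjac a b c)
    rw [← map_zero (algebraMap A (Localization S)), ← hPjacobiator]
    simp only [jacobiator, hQP, map_add]
end

section
/- Let m ≥ 1 be a natural number, let b ∈ ℂ satisfy 0 < |b| < 1, and set a := b^m. Let f : ℂ × ℂ × ℂ → ℂ be holomorphic (complex differentiable at every point) and suppose that f(a·z₁ + t·z₂^m, b·z₂, t) = a·b·f(z₁, z₂, t) for all z₁, z₂, t ∈ ℂ. Then there exists a holomorphic function g : ℂ → ℂ such that f(z₁, z₂, t) = g(t)·z₂^{m+1} for all z₁, z₂, t ∈ ℂ. -/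
/-!
Substituting `z₁ = y wᵐ` turns the generator into `(y, w) ↦ (y + t / a, b w)`, so for fixed `t`
the Taylor coefficients `D_k(y)` of `w ↦ f (y wᵐ, w, t)` satisfy
`bᵏ D_k(y + t / a) = bᵐ⁺¹ D_k(y)`. Cauchy estimates bound `D_k` polynomially in `y`, and a
polynomially bounded function that a translation contracts by the factor `‖b‖^|k - (m+1)|`
vanishes; hence `f (y wᵐ, w, t) = f (y, 1, t) wᵐ⁺¹`. The same relation makes `y ↦ f (y, 1, t)`
periodic with period `t / a`. Taking `t = a y / N` gives `f (y, 1, t) = f (0, 1, t)` along a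
sequence `t → 0`, so by the identity theorem in `t` for all `t`; finally `z₁ = y wᵐ` covers
every point with `w ≠ 0`, and continuity fills in `w = 0`.
-/

open Filter Topology Nat

section Growth

variable {E F : Type*} [SeminormedAddCommGroup E]

lemma norm_le_pow_mul_norm_add_nsmul [SeminormedAddCommGroup F] {u : E → F} {r : ℝ} {d : E}
    (hr : 0 ≤ r) (h : ∀ y, ‖u y‖ ≤ r * ‖u (y + d)‖) (y : E) (n : ℕ) :
    ‖u y‖ ≤ r ^ n * ‖u (y + n • d)‖ := by
  induction n with
  | zero => simp
  | succ n ih =>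
    calc ‖u y‖ ≤ r ^ n * ‖u (y + n • d)‖ := ih
      _ ≤ r ^ n * (r * ‖u (y + n • d + d)‖) := by gcongr; exact h _
      _ = r ^ (n + 1) * ‖u (y + (n + 1) • d)‖ := by
        rw [succ_nsmul, ← add_assoc, pow_succ, mul_assoc]

/-- Iterating the contraction `n` times gives `‖u y‖ ≤ C' nᵏ rⁿ → 0`. -/
lemma eq_zero_of_norm_le_mul_norm_add_of_growth [NormedAddCommGroup F] {u : E → F} {r C : ℝ}
    {k : ℕ} {d : E} (hr0 : 0 ≤ r) (hr1 : r < 1) (hgrowth : ∀ y, ‖u y‖ ≤ C * (1 + ‖y‖) ^ k)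
    (h : ∀ y, ‖u y‖ ≤ r * ‖u (y + d)‖) : u = 0 := by
  funext y
  set A := 1 + ‖y‖ + ‖d‖
  have hbound : ∀ n : ℕ, 1 ≤ n → ‖u y‖ ≤ C * A ^ k * ((n : ℝ) ^ k * r ^ n) := by
    intro n hn
    have hn' : (1 : ℝ) ≤ n := by exact_mod_cast hn
    have hC : 0 ≤ C := by
      have := (norm_nonneg _).trans (hgrowth y)
      exact nonneg_of_mul_nonneg_left this (by positivity)
    have hshift : ‖y + n • d‖ ≤ ‖y‖ + n * ‖d‖ :=
      (norm_add_le _ _).trans (by gcongr; exact norm_nsmul_le)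
    calc ‖u y‖ ≤ r ^ n * ‖u (y + n • d)‖ := norm_le_pow_mul_norm_add_nsmul hr0 h y n
      _ ≤ r ^ n * (C * (A * n) ^ k) := by
        gcongr
        refine (hgrowth _).trans ?_
        gcongr
        nlinarith [norm_nonneg y, norm_nonneg d]
      _ = C * A ^ k * ((n : ℝ) ^ k * r ^ n) := by rw [mul_pow]; ring
  have hlim : Tendsto (fun n : ℕ => C * A ^ k * ((n : ℝ) ^ k * r ^ n)) atTop (𝓝 0) := by
    simpa using (tendsto_pow_const_mul_const_pow_of_abs_lt_one k
      (by rwa [abs_of_nonneg hr0])).const_mul (C * A ^ k)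
  exact norm_le_zero_iff.mp (ge_of_tendsto hlim ((eventually_ge_atTop 1).mono hbound))

end Growth

lemma eq_zero_of_pow_mul_comp_add_eq {E 𝕜 : Type*} [SeminormedAddCommGroup E] [NormedField 𝕜]
    {u : E → 𝕜} {b : 𝕜} {c : E} {k n j : ℕ} {C : ℝ} (hb0 : b ≠ 0) (hb1 : ‖b‖ < 1) (hkn : k ≠ n)
    (hgrowth : ∀ y, ‖u y‖ ≤ C * (1 + ‖y‖) ^ j) (h : ∀ y, b ^ k * u (y + c) = b ^ n * u y) :
    u = 0 := by
  have hcontr : ∀ e, 1 ≤ e → ‖b‖ ^ e < 1 := fun e he => pow_lt_one₀ (norm_nonneg b) hb1 (by omega)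
  rcases hkn.lt_or_gt with hlt | hgt
  · refine eq_zero_of_norm_le_mul_norm_add_of_growth (by positivity) (hcontr (n - k) (by omega))
      hgrowth (d := -c) fun y => le_of_eq ?_
    have := h (y + -c)
    rw [neg_add_cancel_right, ← pow_mul_pow_sub b hlt.le, mul_assoc] at this
    rw [mul_left_cancel₀ (pow_ne_zero k hb0) this, norm_mul, norm_pow]
  · refine eq_zero_of_norm_le_mul_norm_add_of_growth (by positivity) (hcontr (k - n) (by omega))
      hgrowth (d := c) fun y => le_of_eq ?_
    have := h y
    rw [← pow_mul_pow_sub b hgt.le, mul_assoc] at this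
    rw [← mul_left_cancel₀ (pow_ne_zero n hb0) this, norm_mul, norm_pow]

lemma pow_mul_iteratedDeriv_zero_eq_of_comp_mul_eq {𝕜 : Type*} [NontriviallyNormedField 𝕜]
    {F G : 𝕜 → 𝕜} {b s : 𝕜} {k : ℕ} (hG : ContDiff 𝕜 k G) (h : ∀ w, G (b * w) = s * F w) :
    b ^ k * iteratedDeriv k G 0 = s * iteratedDeriv k F 0 := by
  have := congrFun (iteratedDeriv_comp_const_mul hG b) 0
  rw [mul_zero] at this
  rw [← this, ← iteratedDeriv_const_mul_field]
  simp only [h]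

lemma Differentiable.eq_apply_one_mul_pow_of_iteratedDeriv_eq_zero {F : ℂ → ℂ}
    (hF : Differentiable ℂ F) {n : ℕ} (h : ∀ k ≠ n, iteratedDeriv k F 0 = 0) (w : ℂ) :
    F w = F 1 * w ^ n := by
  have hmonomial : ∀ w, F w = (n ! : ℂ)⁻¹ * iteratedDeriv n F 0 * w ^ n := by
    intro w
    rw [← Complex.taylorSeries_eq_of_entire' 0 w hF, tsum_eq_single n fun k hk => by simp [h k hk]]
    simp
  rw [hmonomial w, hmonomial 1, one_pow, mul_one]

/-- Cauchy estimates on the discs of radius `(1 + ‖y‖)⁻¹` bound the Taylor coefficients of `F y`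
polynomially in `y`, and the twisted homogeneity contracts all but the `n`-th of them under the
translation `y ↦ y + c`. -/
theorem apply_eq_apply_one_mul_pow_of_add_mul_eq {F : ℂ → ℂ → ℂ}
    (hF : ∀ y, Differentiable ℂ (F y)) {b c : ℂ} {n : ℕ} {M : ℝ} (hb0 : b ≠ 0) (hb1 : ‖b‖ < 1)
    (hM : ∀ y w, ‖w‖ ≤ (1 + ‖y‖)⁻¹ → ‖F y w‖ ≤ M)
    (h : ∀ y w, F (y + c) (b * w) = b ^ n * F y w) (y w : ℂ) : F y w = F y 1 * w ^ n := by
  have hcoeff : ∀ k y, b ^ k * iteratedDeriv k (F (y + c)) 0 = b ^ n * iteratedDeriv k (F y) 0 :=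
    fun k y => pow_mul_iteratedDeriv_zero_eq_of_comp_mul_eq (hF _).contDiff (h y)
  have hcauchy : ∀ k y, ‖iteratedDeriv k (F y) 0‖ ≤ k ! * M * (1 + ‖y‖) ^ k := by
    intro k y
    have := Complex.norm_iteratedDeriv_le_of_forall_mem_sphere_norm_le k (by positivity)
      (hF y).diffContOnCl fun w hw => hM y w (mem_sphere_zero_iff_norm.mp hw).le
    rwa [inv_pow, div_inv_eq_mul] at this
  refine (hF y).eq_apply_one_mul_pow_of_iteratedDeriv_eq_zero (fun k hk => ?_) w
  exact congrFun (eq_zero_of_pow_mul_comp_add_eq (u := fun y => iteratedDeriv k (F y) 0)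
    hb0 hb1 hk (hcauchy k) (hcoeff k)) y

lemma apply_eq_apply_zero_of_periodic_div {G : ℂ → ℂ → ℂ}
    (hG : ∀ y, Differentiable ℂ fun t => G t y)
    {a : ℂ} (ha : a ≠ 0) (hper : ∀ t, Function.Periodic (G t) (t / a)) (t y : ℂ) :
    G t y = G t 0 := by
  rcases eq_or_ne y 0 with rfl | hy
  · rfl
  have hseq : Tendsto (fun N : ℕ => a * y / N) atTop (𝓝[≠] 0) := by
    refine tendsto_nhdsWithin_iff.mpr ⟨tendsto_const_div_atTop_nhds_zero_nat _, ?_⟩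
    filter_upwards [eventually_ge_atTop 1] with N hN
    exact div_ne_zero (mul_ne_zero ha hy) (by exact_mod_cast (by omega : N ≠ 0))
  have hfreq : ∃ᶠ s in 𝓝[≠] 0, G s y = G s 0 := by
    refine hseq.frequently (Eventually.frequently ?_)
    filter_upwards [eventually_ge_atTop 1] with N hN
    have hN : (N : ℂ) ≠ 0 := by exact_mod_cast (by omega : N ≠ 0)
    have harg : (N : ℂ) * (a * y / N / a) = y := by field_simp
    simpa only [harg] using (hper (a * y / N)).nat_mul_eq N
  exact congrFun (AnalyticOnNhd.eq_of_frequently_eq (fun s _ => (hG y).analyticAt s)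
    (fun s _ => (hG 0).analyticAt s) hfreq) t

/-- `f ∘ g = a b f` for the generator `g (z₁, z₂, t) = (a z₁ + t z₂ᵐ, b z₂, t)`, `a = bᵐ`. -/
def IsHopfInvariant (m : ℕ) (b : ℂ) (f : ℂ × ℂ × ℂ → ℂ) : Prop :=
  ∀ z₁ z₂ t : ℂ, f (b ^ m * z₁ + t * z₂ ^ m, b * z₂, t) = b ^ m * b * f (z₁, z₂, t)

section HopfInvariant

variable {m : ℕ} {b : ℂ} {f : ℂ × ℂ × ℂ → ℂ}

lemma IsHopfInvariant.apply_mul_pow_eq (hm : 1 ≤ m) (hb0 : b ≠ 0) (hb1 : ‖b‖ < 1)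
    (hf : Differentiable ℂ f) (heq : IsHopfInvariant m b f) (t y w : ℂ) :
    f (y * w ^ m, w, t) = f (y, 1, t) * w ^ (m + 1) := by
  obtain ⟨M, hM⟩ := ((isCompact_closedBall (0 : ℂ) 1).prod ((isCompact_closedBall (0 : ℂ) 1).prod
    (isCompact_singleton (x := t)))).exists_bound_of_continuousOn hf.continuous.continuousOn
  have key := apply_eq_apply_one_mul_pow_of_add_mul_eq (F := fun y w => f (y * w ^ m, w, t))
    (fun y => hf.comp (by fun_prop)) hb0 hb1 (c := t / b ^ m) (n := m + 1) (M := M)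
    (fun y w hw => ?_) (fun y w => ?_) y w
  · simpa only [one_pow, mul_one] using key
  · have hw1 : ‖w‖ ≤ 1 := hw.trans (inv_le_one_of_one_le₀ (by simp))
    refine hM _ ⟨?_, ?_, rfl⟩ <;> rw [mem_closedBall_zero_iff]
    · calc ‖y * w ^ m‖ = ‖y‖ * ‖w‖ ^ m := by rw [norm_mul, norm_pow]
        _ ≤ ‖y‖ * (1 + ‖y‖)⁻¹ := by
          gcongr; exact (pow_le_of_le_one (norm_nonneg w) hw1 (by omega)).trans hw
        _ ≤ 1 := by rw [mul_inv_le_iff₀ (by positivity)]; linarith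
    · exact hw1
  · have harg : (y + t / b ^ m) * (b * w) ^ m = b ^ m * (y * w ^ m) + t * w ^ m := by
      field_simp; ring
    simp only [harg, pow_succ]
    exact heq _ _ _

lemma IsHopfInvariant.periodic (hb0 : b ≠ 0) (heq : IsHopfInvariant m b f)
    (hhom : ∀ t y w, f (y * w ^ m, w, t) = f (y, 1, t) * w ^ (m + 1)) (t : ℂ) :
    Function.Periodic (fun y => f (y, 1, t)) (t / b ^ m) := by
  intro y
  have h := heq y 1 t
  rw [one_pow, mul_one, mul_one, show b ^ m * y + t = (y + t / b ^ m) * b ^ m by field_simp,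
    hhom, pow_succ] at h
  exact mul_right_cancel₀ (mul_ne_zero (pow_ne_zero m hb0) hb0) (h.trans (mul_comm _ _))

end HopfInvariant

/-- The coefficient of an invariant holomorphic bivector field on the family of Hopf
surfaces: if `f : ℂ³ → ℂ` is holomorphic, `0 < |b| < 1`, `a = b^m` with `m ≥ 1`, and
`f(a z₁ + t z₂^m, b z₂, t) = a b f(z₁, z₂, t)`, then `f(z₁, z₂, t) = g(t) z₂^(m+1)` for some
holomorphic `g : ℂ → ℂ`. -/
theorem stmt16 (m : ℕ) (hm : 1 ≤ m) (b : ℂ) (hb0 : 0 < ‖b‖)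
    (hb1 : ‖b‖ < 1)
    (f : ℂ × ℂ × ℂ → ℂ) (hf : Differentiable ℂ f)
    (heq : ∀ z₁ z₂ t : ℂ,
      f (b ^ m * z₁ + t * z₂ ^ m, b * z₂, t) = b ^ m * b * f (z₁, z₂, t)) :
    ∃ g : ℂ → ℂ, Differentiable ℂ g ∧
      ∀ z₁ z₂ t : ℂ, f (z₁, z₂, t) = g t * z₂ ^ (m + 1) := by
  have hb : b ≠ 0 := norm_pos_iff.mp hb0
  have hhom := IsHopfInvariant.apply_mul_pow_eq hm hb hb1 hf heq
  have hconst : ∀ t y, f (y, 1, t) = f (0, 1, t) :=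
    apply_eq_apply_zero_of_periodic_div (G := fun t y => f (y, 1, t))
      (fun y => hf.comp (by fun_prop)) (pow_ne_zero m hb) (IsHopfInvariant.periodic hb heq hhom)
  refine ⟨fun t => f (0, 1, t), hf.comp (by fun_prop), fun z₁ z₂ t => ?_⟩
  have hoff : ∀ w ∈ ({0}ᶜ : Set ℂ), f (z₁, w, t) = f (0, 1, t) * w ^ (m + 1) := by
    intro w hw
    rw [← hconst t (z₁ / w ^ m), ← hhom, div_mul_cancel₀ _ (pow_ne_zero m hw)]
  exact congrFun ((hf.continuous.comp (by fun_prop : Continuous fun w : ℂ => (z₁, w, t))).ext_on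
    (dense_compl_singleton 0) (by fun_prop) hoff) z₂
end
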